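/- arXiv:2308.02701 — 6 statements merged into one kernel-verified Lean document; each statement's English description precedes it below -/
import Mathlib

section
/- Let N > r > 0 and let A be an invertible N×N complex matrix. Then A is a lower band matrix of order r if and only if B = A⁻¹ is a lower Green matrix of order r. -/
open Matrix

noncomputable section

/-- `A(i,j) = 0` whenever `i - j > r` (1-based; identical in 0-based `Fin` indexing). -/
def IsLowerBand (N r : ℕ) (A : Matrix (Fin N) (Fin N) ℂ) : Prop :=
  ∀ i j : Fin N, (j : ℕ) + r < (i : ℕ) → A i j = 0

/-- `A(i,j) = 0` whenever `j - i > r`. -/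
def IsUpperBand (N r : ℕ) (A : Matrix (Fin N) (Fin N) ℂ) : Prop :=
  ∀ i j : Fin N, (i : ℕ) + r < (j : ℕ) → A i j = 0

/-- `rank B(k:N, 1:k+r-1) ≤ r` for every `k = 1, …, N-r` (1-based). -/
def IsLowerGreen (N r : ℕ) (B : Matrix (Fin N) (Fin N) ℂ) : Prop :=
  ∀ (k : ℕ) (hk1 : 1 ≤ k) (hk2 : k ≤ N - r),
    (B.submatrix
      (fun i : Fin (N - k + 1) => (⟨k - 1 + (i : ℕ), by have := i.isLt; omega⟩ : Fin N))
      (fun j : Fin (k + r - 1) => (⟨(j : ℕ), by have := j.isLt; omega⟩ : Fin N))).rank ≤ r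

/-- `rank B(1:k+r-1, k:N) ≤ r` for every `k = 1, …, N-r` (1-based). -/
def IsUpperGreen (N r : ℕ) (B : Matrix (Fin N) (Fin N) ℂ) : Prop :=
  ∀ (k : ℕ) (hk1 : 1 ≤ k) (hk2 : k ≤ N - r),
    (B.submatrix
      (fun i : Fin (k + r - 1) => (⟨(i : ℕ), by have := i.isLt; omega⟩ : Fin N))
      (fun j : Fin (N - k + 1) => (⟨k - 1 + (j : ℕ), by have := j.isLt; omega⟩ : Fin N))).rank ≤ r

/-- `a^>_{i,s} = a(i-1) a(i-2) ⋯ a(s+1)`, equal to `I_r` when `s ≥ i - 1`. -/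
def aGT (r : ℕ) (a : ℕ → Matrix (Fin r) (Fin r) ℂ) (i s : ℕ) :
    Matrix (Fin r) (Fin r) ℂ :=
  (((List.range' (s + 1) (i - 1 - s)).reverse).map a).prod

/-- `p(i) ∈ ℂ^{1×r}` (i = 1,…,N−r), `pLast = p(N−r+1) ∈ ℂ^{r×r}`, `q(j) ∈ ℂ^{r×1}`,
`a(k) ∈ ℂ^{r×r}` are lower Green generators of the `N×N` matrix `B`:
`B(i,1:r) = p(i)·a^>_{i,0}`, `B(i,r+s-1) = p(i)·a^>_{i,s-1}·q(s-1)` for `2 ≤ s ≤ i ≤ N-r`,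
and the analogous identities for the last `r` rows `B(N-r+1:N, ·)` with `pLast`. -/
def IsLowerGreenGenerators (N r : ℕ) (hNr : r < N)
    (p : ℕ → Matrix (Fin 1) (Fin r) ℂ) (q : ℕ → Matrix (Fin r) (Fin 1) ℂ)
    (a : ℕ → Matrix (Fin r) (Fin r) ℂ) (pLast : Matrix (Fin r) (Fin r) ℂ)
    (B : Matrix (Fin N) (Fin N) ℂ) : Prop :=
  (∀ (i : ℕ) (hi1 : 1 ≤ i) (hi2 : i ≤ N - r) (j : Fin r),
      B ⟨i - 1, by omega⟩ ⟨(j : ℕ), by have := j.isLt; omega⟩ = (p i * aGT r a i 0) 0 j)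
  ∧ (∀ (i : ℕ) (hi1 : 1 ≤ i) (hi2 : i ≤ N - r) (s : ℕ) (hs1 : 2 ≤ s) (hs2 : s ≤ i),
      B ⟨i - 1, by omega⟩ ⟨r + s - 2, by omega⟩
        = (p i * aGT r a i (s - 1) * q (s - 1)) 0 0)
  ∧ (∀ (t : Fin r) (j : Fin r),
      B ⟨N - r + (t : ℕ), by have := t.isLt; omega⟩ ⟨(j : ℕ), by have := j.isLt; omega⟩
        = (pLast * aGT r a (N - r + 1) 0) t j)
  ∧ (∀ (t : Fin r) (s : ℕ) (hs1 : 2 ≤ s) (hs2 : s ≤ N - r + 1),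
      B ⟨N - r + (t : ℕ), by have := t.isLt; omega⟩ ⟨r + s - 2, by omega⟩
        = (pLast * aGT r a (N - r + 1) (s - 1) * q (s - 1)) t 0)

/-- The embedded factor `I_{k-1} ⊕ M ⊕ I_{N-k-r}` (1-based block position `k`),
i.e. `M` occupies (1-based) rows and columns `k, …, k+r` of an `N×N` identity. -/
def embed (N r k : ℕ) (M : Matrix (Fin (r + 1)) (Fin (r + 1)) ℂ) :
    Matrix (Fin N) (Fin N) ℂ :=
  Matrix.of fun i j =>
    if h : k - 1 ≤ (i : ℕ) ∧ (i : ℕ) < k + r ∧ k - 1 ≤ (j : ℕ) ∧ (j : ℕ) < k + r then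
      M ⟨(i : ℕ) - (k - 1), by omega⟩ ⟨(j : ℕ) - (k - 1), by omega⟩
    else if (i : ℕ) = (j : ℕ) then 1 else 0

/-- The embedded last factor `I_{N-r} ⊕ M`. -/
def embedLast (N r : ℕ) (M : Matrix (Fin r) (Fin r) ℂ) : Matrix (Fin N) (Fin N) ℂ :=
  Matrix.of fun i j =>
    if h : N - r ≤ (i : ℕ) ∧ N - r ≤ (j : ℕ) then
      M ⟨(i : ℕ) - (N - r), by have := i.isLt; omega⟩
        ⟨(j : ℕ) - (N - r), by have := j.isLt; omega⟩
    else if (i : ℕ) = (j : ℕ) then 1 else 0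

/-- `G̃_1 · G̃_2 ⋯ G̃_{N-r}` (increasing order of indices). -/
def prodAsc (N r : ℕ) (G : ℕ → Matrix (Fin (r + 1)) (Fin (r + 1)) ℂ) :
    Matrix (Fin N) (Fin N) ℂ :=
  ((List.range' 1 (N - r)).map (fun k => embed N r k (G k))).prod

/-- `G̃_{N-r} · G̃_{N-r-1} ⋯ G̃_1` (decreasing order of indices). -/
def prodDesc (N r : ℕ) (G : ℕ → Matrix (Fin (r + 1)) (Fin (r + 1)) ℂ) :
    Matrix (Fin N) (Fin N) ℂ :=
  (((List.range' 1 (N - r)).reverse).map (fun k => embed N r k (G k))).prod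

/-- The `1×r` block `p` of the partition `M = [[p, d], [a, q]]`. -/
def blkP (r : ℕ) (M : Matrix (Fin (r + 1)) (Fin (r + 1)) ℂ) : Matrix (Fin 1) (Fin r) ℂ :=
  Matrix.of fun _ j => M 0 j.castSucc

/-- The `1×1` block `d` of the partition `M = [[p, d], [a, q]]`. -/
def blkD (r : ℕ) (M : Matrix (Fin (r + 1)) (Fin (r + 1)) ℂ) : ℂ := M 0 (Fin.last r)

/-- The `r×r` block `a` of the partition `M = [[p, d], [a, q]]`. -/
def blkA (r : ℕ) (M : Matrix (Fin (r + 1)) (Fin (r + 1)) ℂ) : Matrix (Fin r) (Fin r) ℂ :=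
  Matrix.of fun i j => M i.succ j.castSucc

/-- The `r×1` block `q` of the partition `M = [[p, d], [a, q]]`. -/
def blkQ (r : ℕ) (M : Matrix (Fin (r + 1)) (Fin (r + 1)) ℂ) : Matrix (Fin r) (Fin 1) ℂ :=
  Matrix.of fun i _ => M i.succ (Fin.last r)

/-- Assemble the `(r+1)×(r+1)` matrix `[[p, d], [a, q]]` from its blocks. -/
def mkBlk (r : ℕ) (p : Matrix (Fin 1) (Fin r) ℂ) (d : ℂ)
    (a : Matrix (Fin r) (Fin r) ℂ) (q : Matrix (Fin r) (Fin 1) ℂ) :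
    Matrix (Fin (r + 1)) (Fin (r + 1)) ℂ :=
  Matrix.of fun i j =>
    if hi : (i : ℕ) = 0 then
      if hj : (j : ℕ) < r then p 0 ⟨(j : ℕ), hj⟩ else d
    else
      if hj : (j : ℕ) < r then a ⟨(i : ℕ) - 1, by have := i.isLt; omega⟩ ⟨(j : ℕ), hj⟩
      else q ⟨(i : ℕ) - 1, by have := i.isLt; omega⟩ 0

/-- The elementary Gauss factor `[[1, 0_{1×r}], [-f, I_r]]`. -/
def elemL (r : ℕ) (f : Matrix (Fin r) (Fin 1) ℂ) :
    Matrix (Fin (r + 1)) (Fin (r + 1)) ℂ :=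
  Matrix.of fun i j =>
    if hi : (i : ℕ) = 0 then (if (j : ℕ) = 0 then 1 else 0)
    else if hj : (j : ℕ) = 0 then -f ⟨(i : ℕ) - 1, by have := i.isLt; omega⟩ 0
    else if (i : ℕ) = (j : ℕ) then 1 else 0

/-- The elementary factor `[[I_r, 0_{r×1}], [-g, 1]]`. -/
def elemLrow (r : ℕ) (g : Matrix (Fin 1) (Fin r) ℂ) :
    Matrix (Fin (r + 1)) (Fin (r + 1)) ℂ :=
  Matrix.of fun i j =>
    if hi : (i : ℕ) < r then
      (if hj : (j : ℕ) < r then (if (i : ℕ) = (j : ℕ) then 1 else 0) else 0)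
    else if hj : (j : ℕ) < r then -g 0 ⟨(j : ℕ), hj⟩ else 1

/-- All leading principal minors are nonzero. -/
def StronglyRegular (N : ℕ) (A : Matrix (Fin N) (Fin N) ℂ) : Prop :=
  ∀ (k : ℕ) (hk : k ≤ N), 1 ≤ k →
    (A.submatrix (Fin.castLE hk) (Fin.castLE hk)).det ≠ 0

lemma sum_split' {N c : ℕ} (hc : c ≤ N) (f : Fin N → ℂ) :
    ∑ t, f t = (∑ s : Fin c, f ⟨s, by omega⟩)
      + ∑ s : Fin (N - c), f ⟨c + s, by have := s.isLt; omega⟩ := by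
  let e : Fin c ⊕ Fin (N - c) ≃ Fin N :=
    finSumFinEquiv.trans (finCongr (by omega))
  rw [← Equiv.sum_comp e f, Fintype.sum_sum_type]
  rfl

lemma rank_add_card_le {m n p : Type*} [Fintype m] [Fintype n] [Fintype p]
    (C : Matrix m n ℂ) (D : Matrix n p ℂ) (h : C * D = 0)
    (hD : Function.Injective D.mulVecLin) :
    C.rank + Fintype.card p ≤ Fintype.card n := by
  have h1 : LinearMap.range D.mulVecLin ≤ LinearMap.ker C.mulVecLin := by
    rintro _ ⟨x, rfl⟩
    simp only [LinearMap.mem_ker, Matrix.mulVecLin_apply, Matrix.mulVec_mulVec, h,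
      Matrix.zero_mulVec]
  have h2 := LinearMap.finrank_range_add_finrank_ker (C.mulVecLin)
  rw [Module.finrank_fintype_fun_eq_card] at h2
  have h3 : Fintype.card p = Module.finrank ℂ (LinearMap.range D.mulVecLin) := by
    rw [LinearMap.finrank_range_of_inj hD, Module.finrank_fintype_fun_eq_card]
  have h4 : Module.finrank ℂ (LinearMap.range D.mulVecLin)
      ≤ Module.finrank ℂ (LinearMap.ker C.mulVecLin) := Submodule.finrank_mono h1
  have h5 : C.rank = Module.finrank ℂ (LinearMap.range C.mulVecLin) := rfl
  omega

lemma inj_of_card_le_rank {m n : Type*} [Fintype m] [Fintype n]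
    (M : Matrix m n ℂ) (h : Fintype.card n ≤ M.rank) :
    Function.Injective M.mulVecLin := by
  rw [← LinearMap.ker_eq_bot]
  have h2 := LinearMap.finrank_range_add_finrank_ker M.mulVecLin
  rw [Module.finrank_fintype_fun_eq_card] at h2
  have h5 : M.rank = Module.finrank ℂ (LinearMap.range M.mulVecLin) := rfl
  have h6 : M.rank ≤ Fintype.card n := M.rank_le_card_width
  exact Submodule.finrank_eq_zero.mp (by omega)


/-- **Asplund's theorem.** An invertible `N×N` complex matrix `A` (with `N > r > 0`)
is a lower band matrix of order `r` iff `B = A⁻¹` is a lower Green matrix of order `r`. -/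
theorem asplund (N r : ℕ) (hr : 0 < r) (hNr : r < N)
    (A : Matrix (Fin N) (Fin N) ℂ) (hA : IsUnit A) :
    IsLowerBand N r A ↔ IsLowerGreen N r A⁻¹ := by
  classical
  have hdet : IsUnit A.det := (Matrix.isUnit_iff_isUnit_det A).mp hA
  have hBA : A⁻¹ * A = 1 := Matrix.nonsing_inv_mul A hdet
  constructor
  · intro hband k hk1 hk2
    have hcN : k + r - 1 ≤ N := by omega
    let C : Matrix (Fin (N - k + 1)) (Fin (k + r - 1)) ℂ := A⁻¹.submatrix
      (fun i : Fin (N - k + 1) => (⟨k - 1 + (i : ℕ), by have := i.isLt; omega⟩ : Fin N))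
      (fun j : Fin (k + r - 1) => (⟨(j : ℕ), by have := j.isLt; omega⟩ : Fin N))
    let D : Matrix (Fin (k + r - 1)) (Fin (k - 1)) ℂ :=
      Matrix.of fun s t => A ⟨s, by have := s.isLt; omega⟩ ⟨t, by have := t.isLt; omega⟩
    have hCD : C * D = 0 := by
      ext i t
      have hts := t.isLt
      have his := i.isLt
      simp only [Matrix.mul_apply, Matrix.zero_apply, Matrix.submatrix_apply,
        Matrix.of_apply, C, D]
      have hfull : ∑ s : Fin N, A⁻¹ ⟨k - 1 + (i : ℕ), by omega⟩ s
          * A s ⟨(t : ℕ), by omega⟩ = 0 := by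
        rw [← Matrix.mul_apply, hBA, Matrix.one_apply_ne]
        intro h
        have := congrArg Fin.val h
        simp only at this
        omega
      rw [sum_split' hcN (fun s => A⁻¹ ⟨k - 1 + (i : ℕ), by omega⟩ s
          * A s ⟨(t : ℕ), by omega⟩)] at hfull
      have htail : ∑ s : Fin (N - (k + r - 1)),
          (fun s' : Fin N => A⁻¹ ⟨k - 1 + (i : ℕ), by omega⟩ s'
            * A s' ⟨(t : ℕ), by omega⟩) ⟨k + r - 1 + (s : ℕ), by have := s.isLt; omega⟩
            = 0 := by
        apply Finset.sum_eq_zero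
        intro s _
        have hsl := s.isLt
        simp only
        rw [hband ⟨k + r - 1 + (s : ℕ), by omega⟩ ⟨(t : ℕ), by omega⟩ (by simp; omega),
          mul_zero]
      rw [htail, add_zero] at hfull
      exact hfull
    have hDinj : Function.Injective D.mulVecLin := by
      rw [injective_iff_map_eq_zero]
      intro x hx
      have hx' : D.mulVec x = 0 := hx
      let x' : Fin N → ℂ := fun t => if h : (t : ℕ) < k - 1 then x ⟨t, h⟩ else 0
      have hk1N : k - 1 ≤ N := by omega
      have hAx : A.mulVec x' = 0 := by
        funext i0
        show ∑ t : Fin N, A i0 t * x' t = 0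
        rw [sum_split' hk1N (fun t => A i0 t * x' t)]
        have htail : ∑ s : Fin (N - (k - 1)),
            (fun t : Fin N => A i0 t * x' t) ⟨k - 1 + (s : ℕ), by have := s.isLt; omega⟩
              = 0 := by
          apply Finset.sum_eq_zero
          intro s _
          simp only [x']
          rw [dif_neg (by omega), mul_zero]
        rw [htail, add_zero]
        have hhead : ∀ s : Fin (k - 1),
            (fun t : Fin N => A i0 t * x' t) ⟨(s : ℕ), by have := s.isLt; omega⟩
              = A i0 ⟨(s : ℕ), by have := s.isLt; omega⟩ * x s := by
          intro s
          have hsl := s.isLt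
          simp only [x']
          rw [dif_pos hsl]
        rw [Finset.sum_congr rfl (fun s _ => hhead s)]
        by_cases hi0 : (i0 : ℕ) < k + r - 1
        · have := congrFun hx' ⟨(i0 : ℕ), hi0⟩
          simp only [Pi.zero_apply] at this
          rw [← this]
          show _ = ∑ s : Fin (k - 1), D ⟨(i0 : ℕ), hi0⟩ s * x s
          apply Finset.sum_congr rfl
          intro s _
          rfl
        · apply Finset.sum_eq_zero
          intro s _
          have hsl := s.isLt
          rw [hband i0 ⟨(s : ℕ), by omega⟩ (by simp; omega), zero_mul]
      have hx0 : x' = 0 := by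
        have h1 : A⁻¹.mulVec (A.mulVec x') = x' := by
          rw [Matrix.mulVec_mulVec, hBA, Matrix.one_mulVec]
        rw [hAx, Matrix.mulVec_zero] at h1
        exact h1.symm
      funext t
      have htl := t.isLt
      have := congrFun hx0 ⟨(t : ℕ), by omega⟩
      simp only [x', Pi.zero_apply] at this
      rw [dif_pos htl] at this
      exact this
    have key := rank_add_card_le C D hCD hDinj
    rw [Fintype.card_fin, Fintype.card_fin] at key
    show C.rank ≤ r
    omega
  · intro hgreen i j hij
    have hiN := i.isLt
    have hjN := j.isLt
    set k := (j : ℕ) + 2 with hk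
    have hk2 : k ≤ N - r := by omega
    have hc1 : k + r - 1 ≤ N := by omega
    let g : Fin (N - k + 1) → Fin N := fun i' => ⟨k - 1 + (i' : ℕ), by have := i'.isLt; omega⟩
    let M1 : Matrix (Fin (N - k + 1)) (Fin (k + r - 1)) ℂ :=
      A⁻¹.submatrix g (fun s => ⟨(s : ℕ), by have := s.isLt; omega⟩)
    let M2 : Matrix (Fin (N - k + 1)) (Fin (N - (k + r - 1))) ℂ :=
      A⁻¹.submatrix g (fun s => ⟨k + r - 1 + (s : ℕ), by have := s.isLt; omega⟩)
    let Mf : Matrix (Fin (N - k + 1)) (Fin N) ℂ := A⁻¹.submatrix g id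
    have hM1 : M1.rank ≤ r := hgreen k (by omega) hk2
    have hMfA : Mf * A = (1 : Matrix (Fin N) (Fin N) ℂ).submatrix g id := by
      have h := Matrix.submatrix_mul A⁻¹ A g id id Function.bijective_id
      rw [hBA] at h
      rw [Matrix.submatrix_id_id] at h
      exact h.symm
    have hginj : Function.Injective g := by
      intro a b hab
      have := congrArg Fin.val hab
      simp only [g] at this
      ext
      omega
    have hP : ((1 : Matrix (Fin N) (Fin N) ℂ).submatrix g id) *
        ((1 : Matrix (Fin N) (Fin N) ℂ).submatrix g id)ᵀ
          = (1 : Matrix (Fin (N - k + 1)) (Fin (N - k + 1)) ℂ) := by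
      ext a b
      rw [Matrix.mul_apply]
      simp only [Matrix.submatrix_apply, Matrix.transpose_apply, id_eq, Matrix.one_apply]
      rw [Finset.sum_eq_single (g a)
        (fun t _ ht => by rw [if_neg (fun h => ht h.symm), zero_mul])
        (fun h => absurd (Finset.mem_univ _) h)]
      rw [if_pos rfl, one_mul]
      by_cases hab : a = b
      · subst hab
        rw [if_pos rfl, if_pos rfl]
      · rw [if_neg hab, if_neg (fun h => hab (hginj h).symm)]
    have hrankMf : N - k + 1 ≤ Mf.rank := by
      have h1 : ((1 : Matrix (Fin N) (Fin N) ℂ).submatrix g id).rank ≤ Mf.rank := by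
        rw [← hMfA]
        exact Matrix.rank_mul_le_left Mf A
      have h3 : ((1 : Matrix (Fin (N - k + 1)) (Fin (N - k + 1)) ℂ)).rank
          ≤ ((1 : Matrix (Fin N) (Fin N) ℂ).submatrix g id).rank := by
        rw [← hP]
        exact Matrix.rank_mul_le_left _ _
      rw [Matrix.rank_one, Fintype.card_fin] at h3
      omega
    have hdecomp : ∀ x : Fin N → ℂ,
        Mf.mulVec x = M1.mulVec (fun s => x ⟨(s : ℕ), by have := s.isLt; omega⟩)
          + M2.mulVec (fun s => x ⟨k + r - 1 + (s : ℕ), by have := s.isLt; omega⟩) := by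
      intro x
      funext row
      simp only [Matrix.mulVec, dotProduct, Matrix.submatrix_apply, Pi.add_apply,
        id_eq, M1, M2, Mf]
      rw [sum_split' hc1 (fun t => A⁻¹ (g row) t * x t)]
    have hsub : LinearMap.range Mf.mulVecLin
        ≤ LinearMap.range M1.mulVecLin ⊔ LinearMap.range M2.mulVecLin := by
      rintro v ⟨x, rfl⟩
      rw [Matrix.mulVecLin_apply, hdecomp x]
      exact Submodule.add_mem_sup ⟨_, rfl⟩ ⟨_, rfl⟩
    have hsup : N - k + 1 ≤ Module.finrank ℂ
        ↥(LinearMap.range M1.mulVecLin ⊔ LinearMap.range M2.mulVecLin) := by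
      have h := Submodule.finrank_mono hsub
      have h5 : Mf.rank = Module.finrank ℂ (LinearMap.range Mf.mulVecLin) := rfl
      omega
    have hsupinf := Submodule.finrank_sup_add_finrank_inf_eq
      (LinearMap.range M1.mulVecLin) (LinearMap.range M2.mulVecLin)
    have hf1 : Module.finrank ℂ ↥(LinearMap.range M1.mulVecLin) = M1.rank := rfl
    have hf2 : Module.finrank ℂ ↥(LinearMap.range M2.mulVecLin) = M2.rank := rfl
    have hM2le : M2.rank ≤ N - (k + r - 1) := by
      have h := M2.rank_le_card_width
      rwa [Fintype.card_fin] at h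
    have hinf : LinearMap.range M1.mulVecLin ⊓ LinearMap.range M2.mulVecLin = ⊥ :=
      Submodule.finrank_eq_zero.mp (by omega)
    have hM2rank : N - (k + r - 1) ≤ M2.rank := by omega
    have hL2inj : Function.Injective M2.mulVecLin := by
      apply inj_of_card_le_rank
      rw [Fintype.card_fin]
      omega
    have hy : Mf.mulVec (fun t => A t j) = 0 := by
      funext row
      show ∑ t : Fin N, A⁻¹ (g row) t * A t j = 0
      rw [← Matrix.mul_apply, hBA, Matrix.one_apply_ne]
      intro h
      have := congrArg Fin.val h
      simp only [g] at this
      omega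
    have heq := hdecomp (fun t => A t j)
    rw [hy] at heq
    have hmem : M2.mulVec (fun s : Fin (N - (k + r - 1)) =>
          A ⟨k + r - 1 + (s : ℕ), by have := s.isLt; omega⟩ j)
        ∈ LinearMap.range M1.mulVecLin ⊓ LinearMap.range M2.mulVecLin := by
      constructor
      · refine ⟨-(fun s : Fin (k + r - 1) => A ⟨(s : ℕ), by have := s.isLt; omega⟩ j), ?_⟩
        rw [map_neg, Matrix.mulVecLin_apply]
        exact (eq_neg_of_add_eq_zero_right heq.symm).symm
      · exact ⟨_, rfl⟩
    rw [hinf, Submodule.mem_bot] at hmem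
    have hy2 : (fun s : Fin (N - (k + r - 1)) =>
        A ⟨k + r - 1 + (s : ℕ), by have := s.isLt; omega⟩ j) = 0 := by
      apply hL2inj
      rw [map_zero, Matrix.mulVecLin_apply, hmem]
    have h2 := congrFun hy2 ⟨(i : ℕ) - (k + r - 1), by omega⟩
    simp only [Pi.zero_apply] at h2
    have hidx : (⟨k + r - 1 + ((i : ℕ) - (k + r - 1)), by omega⟩ : Fin N) = i := by
      ext
      simp only
      omega
    rw [hidx] at h2
    exact h2
end
end

section
/- Let B be an N×N complex matrix admitting lower Green generators p(i), q(j), a(k), p(N−r+1) of order r. Then B is a lower Green matrix of order r, i.e., rank B(k:N, 1:k+r−1) ≤ r for every k = 1,…,N−r. -/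
open Matrix

noncomputable section

/-! Each entry of `B` on or below the staircase is `u_i · a^>_{ℓ(i), c(j)} · w_j`, with a row
vector `u_i = rowGen i`, a column vector `w_j = colGen j` and levels `ℓ = rowLevel`,
`c = colLevel`. On the block `B(k:N, 1:k+r-1)` one has `c(j) ≤ k - 1 < ℓ(i)`, so
`a^>_{ℓ(i), c(j)} = a^>_{ℓ(i), k-1} · a^>_{k, c(j)}` factors the block through `ℂ^r`. -/

theorem aGT_mul_aGT (r : ℕ) (a : ℕ → Matrix (Fin r) (Fin r) ℂ) {m u v : ℕ}
    (huv : u ≤ v) (hvm : v < m) :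
    aGT r a m v * aGT r a (v + 1) u = aGT r a m u := by
  have happ := List.range'_append (s := u + 1) (m := v - u) (n := m - 1 - v) (step := 1)
  rw [show u + 1 + 1 * (v - u) = v + 1 by omega] at happ
  rw [aGT, aGT, aGT, show m - 1 - u = v - u + (m - 1 - v) by omega, ← happ, List.reverse_append,
    List.map_append, List.prod_append, show v + 1 - 1 - u = v - u by omega]

namespace LowerGreen

def rowLevel (N r i : ℕ) : ℕ := min (i + 1) (N - r + 1)

/-- Truncated subtraction makes this `0` on the first `r` columns. -/
def colLevel (r j : ℕ) : ℕ := j + 1 - r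

def rowGen {N r : ℕ} (p : ℕ → Matrix (Fin 1) (Fin r) ℂ) (pLast : Matrix (Fin r) (Fin r) ℂ)
    (i : Fin N) : Fin r → ℂ :=
  if h : (i : ℕ) < N - r then p (i + 1) 0 else pLast ⟨i - (N - r), by have := i.isLt; omega⟩

def colGen {N r : ℕ} (q : ℕ → Matrix (Fin r) (Fin 1) ℂ) (j : Fin N) : Fin r → ℂ :=
  if h : (j : ℕ) < r then Pi.single ⟨j, h⟩ 1 else fun t => q (colLevel r j) t 0

end LowerGreen

open LowerGreen

namespace IsLowerGreenGenerators

variable {N r : ℕ} {hNr : r < N}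
  {p : ℕ → Matrix (Fin 1) (Fin r) ℂ} {q : ℕ → Matrix (Fin r) (Fin 1) ℂ}
  {a : ℕ → Matrix (Fin r) (Fin r) ℂ} {pLast : Matrix (Fin r) (Fin r) ℂ}
  {B : Matrix (Fin N) (Fin N) ℂ}

theorem apply_eq (hgen : IsLowerGreenGenerators N r hNr p q a pLast B)
    (i j : Fin N) (hij : colLevel r j < rowLevel N r i) :
    B i j = rowGen p pLast i ⬝ᵥ aGT r a (rowLevel N r i) (colLevel r j) *ᵥ colGen q j := by
  obtain ⟨hFirst, hCol, hLastFirst, hLastCol⟩ := hgen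
  obtain ⟨i, hi⟩ := i
  obtain ⟨j, hj⟩ := j
  simp only [rowLevel, colLevel, rowGen, colGen] at hij ⊢
  by_cases hiN : i < N - r <;> by_cases hjr : j < r <;>
    simp only [hiN, hjr, dif_pos, dif_neg, not_false_eq_true]
  · rw [min_eq_left (by omega), show j + 1 - r = 0 by omega, mulVec_single_one]
    exact hFirst (i + 1) (by omega) (by omega) ⟨j, hjr⟩
  · rw [min_eq_left (by omega)]
    have := hCol (i + 1) (by omega) (by omega) (j + 2 - r) (by omega) (by omega)
    simp only [show r + (j + 2 - r) - 2 = j by omega, show j + 2 - r - 1 = j + 1 - r by omega,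
      Matrix.mul_assoc] at this
    exact this
  · rw [min_eq_right (by omega), show j + 1 - r = 0 by omega, mulVec_single_one]
    have := hLastFirst ⟨i - (N - r), by omega⟩ ⟨j, hjr⟩
    simp only [show N - r + (i - (N - r)) = i by omega] at this
    exact this
  · rw [min_eq_right (by omega)]
    have := hLastCol ⟨i - (N - r), by omega⟩ (j + 2 - r) (by omega) (by omega)
    simp only [show N - r + (i - (N - r)) = i by omega, show r + (j + 2 - r) - 2 = j by omega,
      show j + 2 - r - 1 = j + 1 - r by omega, Matrix.mul_assoc] at this
    exact this

theorem rank_submatrix_le (hgen : IsLowerGreenGenerators N r hNr p q a pLast B)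
    {m n : Type*} [Fintype m] [Fintype n] (f : m → Fin N) (g : n → Fin N) (v : ℕ)
    (hf : ∀ i, v < rowLevel N r (f i)) (hg : ∀ j, colLevel r (g j) ≤ v) :
    (B.submatrix f g).rank ≤ r := by
  let P : Matrix m (Fin r) ℂ := .of fun i =>
    rowGen p pLast (f i) ᵥ* aGT r a (rowLevel N r (f i)) v
  let Q : Matrix (Fin r) n ℂ := .of fun t j =>
    (aGT r a (v + 1) (colLevel r (g j)) *ᵥ colGen q (g j)) t
  have hPQ : B.submatrix f g = P * Q := by
    ext i j
    rw [submatrix_apply, hgen.apply_eq _ _ ((hg j).trans_lt (hf i)),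
      ← aGT_mul_aGT r a (hg j) (hf i), ← mulVec_mulVec, dotProduct_mulVec]
    rfl
  calc (B.submatrix f g).rank = (P * Q).rank := by rw [hPQ]
    _ ≤ P.rank := rank_mul_le_left P Q
    _ ≤ r := (rank_le_card_width P).trans_eq (Fintype.card_fin r)

end IsLowerGreenGenerators

theorem lowerGreenGenerators_isLowerGreen_general (N r : ℕ) (hNr : r < N)
    (B : Matrix (Fin N) (Fin N) ℂ)
    (p : ℕ → Matrix (Fin 1) (Fin r) ℂ) (q : ℕ → Matrix (Fin r) (Fin 1) ℂ)
    (a : ℕ → Matrix (Fin r) (Fin r) ℂ) (pLast : Matrix (Fin r) (Fin r) ℂ)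
    (hgen : IsLowerGreenGenerators N r hNr p q a pLast B) :
    IsLowerGreen N r B := by
  intro k hk1 hk2
  refine hgen.rank_submatrix_le _ _ (k - 1) (fun i => ?_) (fun j => ?_)
  · simp only [rowLevel]
    omega
  · have := j.isLt
    simp only [colLevel]
    omega

/-- If an `N×N` matrix `B` admits lower Green generators of order `r`,
then `B` is a lower Green matrix of order `r`. -/
theorem lowerGreenGenerators_isLowerGreen (N r : ℕ) (hr : 0 < r) (hNr : r < N)
    (B : Matrix (Fin N) (Fin N) ℂ)
    (p : ℕ → Matrix (Fin 1) (Fin r) ℂ) (q : ℕ → Matrix (Fin r) (Fin 1) ℂ)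
    (a : ℕ → Matrix (Fin r) (Fin r) ℂ) (pLast : Matrix (Fin r) (Fin r) ℂ)
    (hgen : IsLowerGreenGenerators N r hNr p q a pLast B) :
    IsLowerGreen N r B :=
  lowerGreenGenerators_isLowerGreen_general N r hNr B p q a pLast hgen
end
end

section
/- Let G be an N×N complex matrix that is simultaneously a lower Green matrix of order r and an upper band matrix of order r, with lower Green generators p_G(i), q_G(i), a_G(i) (i = 1,…,N−r), p_G(N−r+1), and set d_G(k) = G(k, k+r) for k = 1,…,N−r. Define G_k = [[p_G(k), d_G(k)],[a_G(k), q_G(k)]] ∈ ℂ^{(r+1)×(r+1)} (blocks of sizes 1×r, 1×1, r×r, r×1) for k = 1,…,N−r and G_{N−r+1} = p_G(N−r+1). Then G = G̃_{N−r+1}·G̃_{N−r}·G̃_{N−r−1}⋯G̃_1 (product in decreasing order of indices of the embedded factors). -/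
open Matrix

noncomputable section

namespace LGFactorAux

open Matrix

/-- Sum of a function vanishing outside a window. -/
lemma sum_window {N : ℕ} (c w : ℕ) (hcw : c + w ≤ N) (f : Fin N → ℂ)
    (hf : ∀ l : Fin N, (l : ℕ) < c ∨ c + w ≤ (l : ℕ) → f l = 0) :
    ∑ l, f l = ∑ u : Fin w, f ⟨c + (u : ℕ), by omega⟩ := by
  classical
  let e : Fin w ↪ Fin N :=
    ⟨fun u => ⟨c + (u : ℕ), by omega⟩, by
      intro u v huv
      have h1 : c + (u : ℕ) = c + (v : ℕ) := congrArg Fin.val huv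
      exact Fin.ext (by omega)⟩
  have h1 : ∑ u : Fin w, f ⟨c + (u : ℕ), by omega⟩ = ∑ l ∈ Finset.univ.map e, f l := by
    rw [Finset.sum_map]
    rfl
  rw [h1]
  refine (Finset.sum_subset (Finset.subset_univ _) ?_).symm
  intro l _ hl
  refine hf l ?_
  by_contra hcon
  push_neg at hcon
  exact hl (Finset.mem_map.mpr ⟨⟨(l : ℕ) - c, by omega⟩, Finset.mem_univ _,
    Fin.ext (by show c + ((l : ℕ) - c) = (l : ℕ); omega)⟩)

lemma delta_vecMul {N : ℕ} (i : Fin N) (M : Matrix (Fin N) (Fin N) ℂ) :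
    Matrix.vecMul (fun l : Fin N => if (i : ℕ) = (l : ℕ) then (1 : ℂ) else 0) M = M i := by
  funext j
  have h1 : Matrix.vecMul (fun l : Fin N => if (i : ℕ) = (l : ℕ) then (1 : ℂ) else 0) M j
      = ∑ l : Fin N, (if (i : ℕ) = (l : ℕ) then (1 : ℂ) else 0) * M l j := by
    simp [Matrix.vecMul, dotProduct]
  rw [h1, Finset.sum_eq_single i]
  · simp
  · intro b _ hb
    rw [if_neg (fun h => hb (Fin.ext h).symm), zero_mul]
  · intro h; exact absurd (Finset.mem_univ i) h

end LGFactorAux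

namespace LGFactorAux

open Matrix

/-- The row vector that is zero before (1-based) column `m`, carries the active block `x`
in columns `m, …, m+r-1`, and `rest` beyond. -/
def vecm (N r : ℕ) (x : Matrix (Fin 1) (Fin r) ℂ) (m : ℕ) (rest : Fin N → ℂ) :
    Fin N → ℂ := fun j =>
  if _h1 : (j : ℕ) + 1 < m then 0
  else if h2 : (j : ℕ) < m + r - 1 then x 0 ⟨(j : ℕ) - (m - 1), by omega⟩
  else rest j

/-- Partial descending product `G̃_m ⋯ G̃_1`. -/
def Pd (N r : ℕ) (G : ℕ → Matrix (Fin (r + 1)) (Fin (r + 1)) ℂ) (m : ℕ) :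
    Matrix (Fin N) (Fin N) ℂ :=
  (((List.range' 1 m).reverse).map (fun k => embed N r k (G k))).prod

lemma Pd_succ (N r : ℕ) (G : ℕ → Matrix (Fin (r + 1)) (Fin (r + 1)) ℂ) (m : ℕ) :
    Pd N r G (m + 1) = embed N r (m + 1) (G (m + 1)) * Pd N r G m := by
  unfold Pd
  have h : (1 : ℕ) + m = m + 1 := Nat.add_comm 1 m
  rw [List.range'_1_concat, h, List.reverse_append, List.reverse_singleton,
    List.singleton_append, List.map_cons, List.prod_cons]

lemma aGT_top (r : ℕ) (a : ℕ → Matrix (Fin r) (Fin r) ℂ) (i s : ℕ) (h : i - 1 ≤ s) :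
    aGT r a i s = 1 := by
  unfold aGT
  have h0 : i - 1 - s = 0 := by omega
  rw [h0]
  simp

lemma aGT_succ (r : ℕ) (a : ℕ → Matrix (Fin r) (Fin r) ℂ) (i s : ℕ) (hs : s + 1 ≤ i) :
    aGT r a (i + 1) s = a i * aGT r a i s := by
  unfold aGT
  have h1 : (i + 1) - 1 - s = (i - 1 - s) + 1 := by omega
  have h2 : s + 1 + (i - 1 - s) = i := by omega
  rw [h1, List.range'_1_concat, h2, List.reverse_append, List.reverse_singleton,
    List.singleton_append, List.map_cons, List.prod_cons]

lemma step_mul (N r m : ℕ) (hm1 : 1 ≤ m) (hmr : m + r ≤ N)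
    (x : Matrix (Fin 1) (Fin r) ℂ) (rest : Fin N → ℂ)
    (P : Matrix (Fin 1) (Fin r) ℂ) (D : ℂ)
    (A : Matrix (Fin r) (Fin r) ℂ) (Q : Matrix (Fin r) (Fin 1) ℂ) :
    Matrix.vecMul (vecm N r x (m + 1) rest) (embed N r m (mkBlk r P D A Q))
      = vecm N r (x * A) m
          (fun j => if (j : ℕ) = m + r - 1 then (x * Q) 0 0 else rest j) := by
  funext j
  have hsum : Matrix.vecMul (vecm N r x (m + 1) rest) (embed N r m (mkBlk r P D A Q)) j
      = ∑ l : Fin N, vecm N r x (m + 1) rest l * embed N r m (mkBlk r P D A Q) l j := by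
    simp [Matrix.vecMul, dotProduct]
  rw [hsum]
  by_cases hj : m - 1 ≤ (j : ℕ) ∧ (j : ℕ) < m + r
  · -- column inside the window
    have hside : ∀ l : Fin N, (l : ℕ) < m ∨ m + r ≤ (l : ℕ) →
        vecm N r x (m + 1) rest l * embed N r m (mkBlk r P D A Q) l j = 0 := by
      intro l hl
      rcases hl with hl | hl
      · have h0 : vecm N r x (m + 1) rest l = 0 := by
          unfold vecm; rw [dif_pos (by omega)]
        rw [h0, zero_mul]
      · have h0 : embed N r m (mkBlk r P D A Q) l j = 0 := by
          unfold embed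
          rw [Matrix.of_apply, dif_neg (by omega), if_neg (by omega)]
        rw [h0, mul_zero]
    rw [sum_window m r hmr _ hside]
    have hterm : ∀ u : Fin r,
        vecm N r x (m + 1) rest ⟨m + (u : ℕ), by omega⟩
          * embed N r m (mkBlk r P D A Q) ⟨m + (u : ℕ), by omega⟩ j
        = x 0 u * mkBlk r P D A Q ⟨(u : ℕ) + 1, by omega⟩
            ⟨(j : ℕ) - (m - 1), by omega⟩ := by
      intro u
      congr 1
      · unfold vecm
        rw [dif_neg (by simp only [Fin.val_mk]; omega),
          dif_pos (by simp only [Fin.val_mk]; omega)]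
        congr 1
        exact Fin.ext (by simp only [Fin.val_mk]; omega)
      · unfold embed
        rw [Matrix.of_apply, dif_pos (by simp only [Fin.val_mk]; omega)]
        congr 1
        exact Fin.ext (by simp only [Fin.val_mk]; omega)
    rw [Finset.sum_congr rfl (fun u _ => hterm u)]
    by_cases hjr : (j : ℕ) < m + r - 1
    · -- the `A` part
      have hblk : ∀ u : Fin r,
          mkBlk r P D A Q ⟨(u : ℕ) + 1, by omega⟩ ⟨(j : ℕ) - (m - 1), by omega⟩
            = A u ⟨(j : ℕ) - (m - 1), by omega⟩ := by
        intro u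
        unfold mkBlk
        rw [Matrix.of_apply, dif_neg (by simp only [Fin.val_mk]; omega),
          dif_pos (by simp only [Fin.val_mk]; omega)]
        congr 1 <;> exact Fin.ext (by simp only [Fin.val_mk]; omega)
      rw [Finset.sum_congr rfl (fun u _ => by rw [hblk u])]
      rw [← Matrix.mul_apply]
      have hR : vecm N r (x * A) m
          (fun j => if (j : ℕ) = m + r - 1 then (x * Q) 0 0 else rest j) j
          = (x * A) 0 ⟨(j : ℕ) - (m - 1), by omega⟩ := by
        unfold vecm
        rw [dif_neg (by omega), dif_pos (by omega)]
      rw [hR]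
    · -- j = m + r - 1 : the `Q` part
      have hjeq : (j : ℕ) = m + r - 1 := by omega
      have hblk : ∀ u : Fin r,
          mkBlk r P D A Q ⟨(u : ℕ) + 1, by omega⟩ ⟨(j : ℕ) - (m - 1), by omega⟩
            = Q u 0 := by
        intro u
        unfold mkBlk
        rw [Matrix.of_apply, dif_neg (by simp only [Fin.val_mk]; omega),
          dif_neg (by simp only [Fin.val_mk]; omega)]
        congr 1 <;> exact Fin.ext (by simp only [Fin.val_mk]; omega)
      rw [Finset.sum_congr rfl (fun u _ => by rw [hblk u])]
      have hq : ∑ u : Fin r, x 0 u * Q u 0 = (x * Q) 0 0 := (Matrix.mul_apply).symm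
      have hR : vecm N r (x * A) m
          (fun j => if (j : ℕ) = m + r - 1 then (x * Q) 0 0 else rest j) j
          = (x * Q) 0 0 := by
        unfold vecm
        rw [dif_neg (by omega), dif_neg (by omega)]
        exact if_pos hjeq
      rw [hq, hR]
  · -- column outside the window: identity column
    have hdelta : ∀ l : Fin N, embed N r m (mkBlk r P D A Q) l j
        = if (l : ℕ) = (j : ℕ) then (1 : ℂ) else 0 := by
      intro l
      unfold embed
      rw [Matrix.of_apply, dif_neg (by omega)]
    rw [Finset.sum_congr rfl (fun l _ => by rw [hdelta l])]
    have hsum2 : ∑ l : Fin N, vecm N r x (m + 1) rest l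
        * (if (l : ℕ) = (j : ℕ) then (1 : ℂ) else 0) = vecm N r x (m + 1) rest j := by
      rw [Finset.sum_eq_single j]
      · simp
      · intro b _ hb
        rw [if_neg (fun h => hb (Fin.ext h)), mul_zero]
      · intro h; exact absurd (Finset.mem_univ j) h
    rw [hsum2]
    by_cases hj2 : (j : ℕ) + 1 < m
    · unfold vecm
      rw [dif_pos (by omega), dif_pos (by omega)]
    · -- j ≥ m + r
      have hge : m + r ≤ (j : ℕ) := by omega
      have hL : vecm N r x (m + 1) rest j = rest j := by
        unfold vecm
        rw [dif_neg (by omega), dif_neg (by omega)]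
      have hR : vecm N r (x * A) m
          (fun j => if (j : ℕ) = m + r - 1 then (x * Q) 0 0 else rest j) j
          = rest j := by
        unfold vecm
        rw [dif_neg (by omega), dif_neg (by omega)]
        exact if_neg (by omega)
      rw [hL, hR]

end LGFactorAux

namespace LGFactorAux

open Matrix

lemma key_vecMul (N r : ℕ)
    (p : ℕ → Matrix (Fin 1) (Fin r) ℂ) (q : ℕ → Matrix (Fin r) (Fin 1) ℂ)
    (a : ℕ → Matrix (Fin r) (Fin r) ℂ) (d : ℕ → ℂ) :
    ∀ (m : ℕ), m + r ≤ N →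
    ∀ (x : Matrix (Fin 1) (Fin r) ℂ) (rest : Fin N → ℂ),
    Matrix.vecMul (vecm N r x (m + 1) rest)
        (Pd N r (fun k => mkBlk r (p k) (d k) (a k) (q k)) m)
      = fun j : Fin N => if h : (j : ℕ) < r then (x * aGT r a (m + 1) 0) 0 ⟨(j : ℕ), h⟩
        else if (j : ℕ) < m + r then
          (x * aGT r a (m + 1) ((j : ℕ) - r + 1) * q ((j : ℕ) - r + 1)) 0 0
        else rest j := by
  intro m
  induction m with
  | zero =>
    intro hm x rest
    funext j
    have h1 : Pd N r (fun k => mkBlk r (p k) (d k) (a k) (q k)) 0 = 1 := rfl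
    rw [h1, Matrix.vecMul_one]
    beta_reduce
    unfold vecm
    by_cases hj : (j : ℕ) < r
    · rw [dif_neg (by omega), dif_pos (by omega), dif_pos hj,
        aGT_top r a 1 0 (by omega), Matrix.mul_one]
      congr 1 <;> exact Fin.ext (by simp only [Fin.val_mk]; omega)
    · rw [dif_neg (by omega), dif_neg (by omega), dif_neg hj, if_neg (by omega)]
  | succ m ih =>
    intro hm x rest
    funext j
    rw [Pd_succ, ← Matrix.vecMul_vecMul,
      step_mul N r (m + 1) (by omega) (by omega), ih (by omega)]
    beta_reduce
    by_cases hj : (j : ℕ) < r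
    · rw [dif_pos hj, dif_pos hj, aGT_succ r a (m + 1) 0 (by omega), ← Matrix.mul_assoc _ _ _]
    · rw [dif_neg hj, dif_neg hj]
      by_cases hj2 : (j : ℕ) < m + r
      · rw [if_pos hj2, if_pos (by omega),
          aGT_succ r a (m + 1) ((j : ℕ) - r + 1) (by omega), ← Matrix.mul_assoc _ _ _]
      · by_cases hj3 : (j : ℕ) < m + 1 + r
        · -- j = m + r
          have hjeq : (j : ℕ) = m + r := by omega
          rw [if_neg hj2, if_pos hj3, if_pos (by omega),
            show (j : ℕ) - r + 1 = m + 1 by omega,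
            aGT_top r a (m + 1 + 1) (m + 1) (by omega), Matrix.mul_one]
        · rw [if_neg hj2, if_neg hj3, if_neg (by omega)]

lemma pass (N r : ℕ) (Gk : ℕ → Matrix (Fin (r + 1)) (Fin (r + 1)) ℂ) (i : Fin N) :
    ∀ (m : ℕ), (i : ℕ) + 1 ≤ m →
    Matrix.vecMul (fun l : Fin N => if (i : ℕ) = (l : ℕ) then (1 : ℂ) else 0) (Pd N r Gk m)
      = Matrix.vecMul (fun l : Fin N => if (i : ℕ) = (l : ℕ) then (1 : ℂ) else 0)
          (Pd N r Gk ((i : ℕ) + 1)) := by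
  intro m
  induction m with
  | zero => intro hm; omega
  | succ m ih =>
    intro hm
    rcases Nat.eq_or_lt_of_le hm with h | h
    · rw [← h]
    · have hm' : (i : ℕ) + 1 ≤ m := by omega
      rw [Pd_succ, ← Matrix.vecMul_vecMul]
      have hrow : Matrix.vecMul (fun l : Fin N => if (i : ℕ) = (l : ℕ) then (1 : ℂ) else 0)
          (embed N r (m + 1) (Gk (m + 1)))
          = (fun l : Fin N => if (i : ℕ) = (l : ℕ) then (1 : ℂ) else 0) := by
        rw [delta_vecMul]
        funext l
        unfold embed
        rw [Matrix.of_apply, dif_neg (by omega)]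
      rw [hrow, ih hm']

end LGFactorAux

open LGFactorAux

/-- Conversely, a lower Green and upper band matrix of order `r` with given lower Green
generators and diagonal entries `d_G(k) = G(k, k+r)` factors as the product
`G̃_{N-r+1}·G̃_{N-r}⋯G̃_1` of the embedded factors built from the blocks. -/
theorem lowerGreen_upperBand_factors (N r : ℕ) (hr : 0 < r) (hNr : r < N)
    (G : Matrix (Fin N) (Fin N) ℂ)
    (p : ℕ → Matrix (Fin 1) (Fin r) ℂ) (q : ℕ → Matrix (Fin r) (Fin 1) ℂ)
    (a : ℕ → Matrix (Fin r) (Fin r) ℂ) (pLast : Matrix (Fin r) (Fin r) ℂ)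
    (hGreen : IsLowerGreen N r G) (hBand : IsUpperBand N r G)
    (hgen : IsLowerGreenGenerators N r hNr p q a pLast G)
    (d : ℕ → ℂ)
    (hd : ∀ (k : ℕ) (hk1 : 1 ≤ k) (hk2 : k ≤ N - r),
      d k = G ⟨k - 1, by omega⟩ ⟨k + r - 1, by omega⟩) :
    G = embedLast N r pLast * prodDesc N r (fun k => mkBlk r (p k) (d k) (a k) (q k)) := by
  classical
  obtain ⟨hg1, hg2, hg3, hg4⟩ := hgen
  ext i j
  have hjN : (j : ℕ) < N := j.isLt
  have hiN : (i : ℕ) < N := i.isLt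
  have hmul : (embedLast N r pLast
        * prodDesc N r (fun k => mkBlk r (p k) (d k) (a k) (q k))) i j
      = Matrix.vecMul (fun l : Fin N => embedLast N r pLast i l)
          (Pd N r (fun k => mkBlk r (p k) (d k) (a k) (q k)) (N - r)) j := by
    have hPd : prodDesc N r (fun k => mkBlk r (p k) (d k) (a k) (q k))
        = Pd N r (fun k => mkBlk r (p k) (d k) (a k) (q k)) (N - r) := rfl
    rw [hPd]
    simp [Matrix.mul_apply, Matrix.vecMul, dotProduct]
  rw [hmul]
  by_cases hi : (i : ℕ) < N - r
  · -- rows 1, …, N-r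
    have hrow : (fun l : Fin N => embedLast N r pLast i l)
        = (fun l : Fin N => if (i : ℕ) = (l : ℕ) then (1 : ℂ) else 0) := by
      funext l
      unfold embedLast
      rw [Matrix.of_apply, dif_neg (by omega)]
    rw [hrow, pass N r _ i (N - r) (by omega), Pd_succ, ← Matrix.vecMul_vecMul,
      delta_vecMul]
    beta_reduce
    have hrow2 : (embed N r ((i : ℕ) + 1)
          (mkBlk r (p ((i : ℕ) + 1)) (d ((i : ℕ) + 1)) (a ((i : ℕ) + 1)) (q ((i : ℕ) + 1)))) i
        = vecm N r (p ((i : ℕ) + 1)) ((i : ℕ) + 1)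
            (fun j' : Fin N => if (j' : ℕ) = (i : ℕ) + r then d ((i : ℕ) + 1) else 0) := by
      funext j'
      unfold embed vecm
      rw [Matrix.of_apply]
      by_cases h1 : (j' : ℕ) + 1 < (i : ℕ) + 1
      · rw [dif_neg (by omega), if_neg (by omega), dif_pos h1]
      · by_cases h2 : (j' : ℕ) < (i : ℕ) + r
        · rw [dif_pos (by omega), dif_neg (by omega), dif_pos (by omega)]
          unfold mkBlk
          rw [Matrix.of_apply, dif_pos (by simp only [Fin.val_mk]; omega),
            dif_pos (by simp only [Fin.val_mk]; omega)]
        · by_cases h3 : (j' : ℕ) = (i : ℕ) + r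
          · rw [dif_pos (by omega), dif_neg (by omega), dif_neg (by omega)]
            beta_reduce
            rw [if_pos h3]
            unfold mkBlk
            rw [Matrix.of_apply, dif_pos (by simp only [Fin.val_mk]; omega),
              dif_neg (by simp only [Fin.val_mk]; omega)]
          · rw [dif_neg (by omega), if_neg (by omega), dif_neg (by omega),
              dif_neg (by omega)]
            beta_reduce
            rw [if_neg h3]
    rw [hrow2, key_vecMul N r p q a d (i : ℕ) (by omega)]
    beta_reduce
    by_cases hj : (j : ℕ) < r
    · rw [dif_pos hj]
      have hG := hg1 ((i : ℕ) + 1) (by omega) (by omega) ⟨(j : ℕ), hj⟩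
      calc G i j
          = G ⟨(i : ℕ) + 1 - 1, by omega⟩ ⟨((⟨(j : ℕ), hj⟩ : Fin r) : ℕ), by omega⟩ := by
            congr 1 <;> exact Fin.ext (by simp only [Fin.val_mk]; omega)
        _ = _ := hG
    · rw [dif_neg hj]
      by_cases hj2 : (j : ℕ) < (i : ℕ) + r
      · rw [if_pos hj2]
        have hG := hg2 ((i : ℕ) + 1) (by omega) (by omega) ((j : ℕ) - r + 2)
          (by omega) (by omega)
        have harith2 : (j : ℕ) - r + 2 - 1 = (j : ℕ) - r + 1 := by omega
        rw [harith2] at hG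
        calc G i j
            = G ⟨(i : ℕ) + 1 - 1, by omega⟩ ⟨r + ((j : ℕ) - r + 2) - 2, by omega⟩ := by
              congr 1 <;> exact Fin.ext (by simp only [Fin.val_mk]; omega)
          _ = _ := hG
      · by_cases hj3 : (j : ℕ) = (i : ℕ) + r
        · rw [if_neg hj2, if_pos hj3, hd ((i : ℕ) + 1) (by omega) (by omega)]
          congr 1 <;> exact Fin.ext (by simp only [Fin.val_mk]; omega)
        · rw [if_neg hj2, if_neg hj3]
          exact hBand i j (by omega)
  · -- rows N-r+1, …, N
    have ht : (i : ℕ) - (N - r) < r := by omega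
    have hrow : (fun l : Fin N => embedLast N r pLast i l)
        = vecm N r (Matrix.of fun _ c => pLast ⟨(i : ℕ) - (N - r), ht⟩ c)
            (N - r + 1) (fun _ => 0) := by
      funext l
      unfold embedLast vecm
      rw [Matrix.of_apply]
      by_cases h1 : (l : ℕ) < N - r
      · rw [dif_neg (by omega), if_neg (by omega), dif_pos (by omega)]
      · rw [dif_pos (by omega), dif_neg (by omega), dif_pos (by omega), Matrix.of_apply]
        congr 1 <;> exact Fin.ext (by simp only [Fin.val_mk]; omega)
    rw [hrow, key_vecMul N r p q a d (N - r) (by omega)]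
    beta_reduce
    by_cases hj : (j : ℕ) < r
    · rw [dif_pos hj]
      have hx : ((Matrix.of fun _ c => pLast ⟨(i : ℕ) - (N - r), ht⟩ c :
            Matrix (Fin 1) (Fin r) ℂ) * aGT r a (N - r + 1) 0) 0 ⟨(j : ℕ), hj⟩
          = (pLast * aGT r a (N - r + 1) 0) ⟨(i : ℕ) - (N - r), ht⟩ ⟨(j : ℕ), hj⟩ := by
        rw [Matrix.mul_apply, Matrix.mul_apply]
        rfl
      rw [hx]
      have hG := hg3 ⟨(i : ℕ) - (N - r), ht⟩ ⟨(j : ℕ), hj⟩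
      calc G i j
          = G ⟨N - r + ((i : ℕ) - (N - r)), by omega⟩ ⟨(j : ℕ), by omega⟩ := by
            congr 1 <;> exact Fin.ext (by simp only [Fin.val_mk]; omega)
        _ = _ := hG
    · rw [dif_neg hj, if_pos (by omega)]
      have hx1 : ((Matrix.of fun _ c => pLast ⟨(i : ℕ) - (N - r), ht⟩ c :
            Matrix (Fin 1) (Fin r) ℂ)
            * aGT r a (N - r + 1) ((j : ℕ) - r + 1) * q ((j : ℕ) - r + 1)) 0 0
          = (pLast * aGT r a (N - r + 1) ((j : ℕ) - r + 1) * q ((j : ℕ) - r + 1))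
              ⟨(i : ℕ) - (N - r), ht⟩ 0 := by
        rw [Matrix.mul_assoc _ _ _, Matrix.mul_assoc _ _ _, Matrix.mul_apply,
          Matrix.mul_apply]
        rfl
      rw [hx1]
      have hG := hg4 ⟨(i : ℕ) - (N - r), ht⟩ ((j : ℕ) - r + 2) (by omega) (by omega)
      have harith2 : (j : ℕ) - r + 2 - 1 = (j : ℕ) - r + 1 := by omega
      rw [harith2] at hG
      calc G i j
          = G ⟨N - r + ((i : ℕ) - (N - r)), by omega⟩ ⟨r + ((j : ℕ) - r + 2) - 2, by omega⟩ := by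
            congr 1 <;> exact Fin.ext (by simp only [Fin.val_mk]; omega)
        _ = _ := hG
end
end

section
/- Let W = W̃_1·W̃_2⋯W̃_{N−r+1} (product in increasing order of indices), where the embedded factors are built from matrices W_k ∈ ℂ^{(r+1)×(r+1)} (k = 1,…,N−r) and W_{N−r+1} ∈ ℂ^{r×r}. Then W is simultaneously an upper Green matrix of order r and a lower band matrix of order r. -/
open Matrix

noncomputable section

/-!
Split `W = P·Q` with `P = W̃_1 ⋯ W̃_{k-1}` and `Q = W̃_k ⋯ W̃_{N-r+1}`. Every factor of `P` is the
identity beyond row and column `k+r-1`, hence so is `P`; every factor of `Q` is the identity on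
its first `k-1` rows, hence so is `Q`. So in `W(1:k+r-1, k:N) = Σ_t P(·,t) Q(t,·)` only the `r`
indices `t = k, …, k+r-1` contribute, and that block has rank at most `r`.

For the band structure: right multiplication by `W̃_k` only mixes columns `k, …, k+r` of the
running product `W̃_1 ⋯ W̃_{k-1}`, whose rows from `k+r` on are still identity rows, so no entry
below the `r`-th subdiagonal is ever created.
-/

namespace Matrix

theorem rank_submatrix_mul_le_card {m n o ι κ K : Type*} [Fintype n] [Fintype κ]
    [CommSemiring K] [StrongRankCondition K] (A : Matrix m n K) (B : Matrix n o K)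
    (f : ι → m) (g : κ → o) (s : Finset n) (h : ∀ i j, ∀ t ∉ s, A (f i) t * B t (g j) = 0) :
    ((A * B).submatrix f g).rank ≤ s.card := by
  have hfactor : (A * B).submatrix f g = A.submatrix f ((↑) : s → n) * B.submatrix (↑) g := by
    ext i j
    simp only [submatrix_apply, mul_apply]
    rw [← Finset.sum_subset (Finset.subset_univ s) (fun t _ ht => h i j t ht)]
    exact (Finset.sum_coe_sort s _).symm
  rw [hfactor]
  exact (rank_mul_le_right _ _).trans ((rank_le_card_height _).trans (Fintype.card_coe s).le)

variable {n R : Type*} [DecidableEq n] [Semiring R]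

def IdentityOnRows (S : Set n) (A : Matrix n n R) : Prop :=
  ∀ i ∈ S, A i = (1 : Matrix n n R) i

def IdentityOnCols (S : Set n) (A : Matrix n n R) : Prop :=
  ∀ j ∈ S, ∀ i, A i j = (1 : Matrix n n R) i j

variable {S T : Set n} {A B : Matrix n n R}

theorem IdentityOnRows.mono (hA : IdentityOnRows S A) (hTS : T ⊆ S) : IdentityOnRows T A :=
  fun i hi => hA i (hTS hi)

theorem IdentityOnCols.mono (hA : IdentityOnCols S A) (hTS : T ⊆ S) : IdentityOnCols T A :=
  fun j hj => hA j (hTS hj)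

theorem IdentityOnRows.mul_apply [Fintype n] (hA : IdentityOnRows S A) {i : n} (hi : i ∈ S)
    (j : n) : (A * B) i j = B i j := by
  rw [Matrix.mul_apply]
  simp_rw [hA i hi]
  rw [← Matrix.mul_apply, one_mul]

theorem IdentityOnCols.mul_apply [Fintype n] (hB : IdentityOnCols S B) (i : n) {j : n}
    (hj : j ∈ S) : (A * B) i j = A i j := by
  rw [Matrix.mul_apply]
  simp_rw [hB j hj]
  rw [← Matrix.mul_apply, mul_one]

theorem IdentityOnRows.mul [Fintype n] (hA : IdentityOnRows S A) (hB : IdentityOnRows S B) :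
    IdentityOnRows S (A * B) :=
  fun i hi => funext fun j => (hA.mul_apply hi j).trans (congrFun (hB i hi) j)

theorem IdentityOnCols.mul [Fintype n] (hA : IdentityOnCols S A) (hB : IdentityOnCols S B) :
    IdentityOnCols S (A * B) :=
  fun j hj i => (hB.mul_apply i hj).trans (hA j hj i)

theorem IdentityOnRows.list_prod [Fintype n] {l : List (Matrix n n R)}
    (hl : ∀ A ∈ l, IdentityOnRows S A) : IdentityOnRows S l.prod :=
  List.prod_induction _ (fun _ _ => IdentityOnRows.mul) (fun _ _ => rfl) hl

theorem IdentityOnCols.list_prod [Fintype n] {l : List (Matrix n n R)}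
    (hl : ∀ A ∈ l, IdentityOnCols S A) : IdentityOnCols S l.prod :=
  List.prod_induction _ (fun _ _ => IdentityOnCols.mul) (fun _ _ _ => rfl) hl

end Matrix

open Matrix

variable {N r : ℕ}

theorem one_apply_val (i j : Fin N) :
    (1 : Matrix (Fin N) (Fin N) ℂ) i j = if (i : ℕ) = (j : ℕ) then 1 else 0 := by
  simp only [one_apply, Fin.val_inj]

theorem embed_apply_outside_block (k : ℕ) (M : Matrix (Fin (r + 1)) (Fin (r + 1)) ℂ)
    {i j : Fin N}
    (h : ¬(k - 1 ≤ (i : ℕ) ∧ (i : ℕ) < k + r ∧ k - 1 ≤ (j : ℕ) ∧ (j : ℕ) < k + r)) :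
    embed N r k M i j = (1 : Matrix (Fin N) (Fin N) ℂ) i j := by
  rw [one_apply_val, embed, of_apply, dif_neg h]

theorem identityOnRows_embed (k : ℕ) (M : Matrix (Fin (r + 1)) (Fin (r + 1)) ℂ) :
    IdentityOnRows {i : Fin N | ¬(k - 1 ≤ (i : ℕ) ∧ (i : ℕ) < k + r)} (embed N r k M) :=
  fun _ hi => funext fun _ => embed_apply_outside_block k M (by grind)

theorem identityOnCols_embed (k : ℕ) (M : Matrix (Fin (r + 1)) (Fin (r + 1)) ℂ) :
    IdentityOnCols {j : Fin N | ¬(k - 1 ≤ (j : ℕ) ∧ (j : ℕ) < k + r)} (embed N r k M) :=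
  fun _ hj _ => embed_apply_outside_block k M (by grind)

theorem isLowerBand_embed (k : ℕ) (M : Matrix (Fin (r + 1)) (Fin (r + 1)) ℂ) :
    IsLowerBand N r (embed N r k M) := fun i j hij => by
  rw [embed_apply_outside_block k M (by omega), one_apply_val, if_neg (by omega)]

theorem identityOnRows_embedLast (M : Matrix (Fin r) (Fin r) ℂ) :
    IdentityOnRows {i : Fin N | (i : ℕ) < N - r} (embedLast N r M) :=
  fun _ _ => funext fun _ => by rw [one_apply_val, embedLast, of_apply, dif_neg (by grind)]

theorem identityOnCols_embedLast (M : Matrix (Fin r) (Fin r) ℂ) :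
    IdentityOnCols {j : Fin N | (j : ℕ) < N - r} (embedLast N r M) := fun j hj i => by
  rw [one_apply_val, embedLast, of_apply, dif_neg (by grind)]

theorem IsLowerBand.mul_embed {A : Matrix (Fin N) (Fin N) ℂ} (hA : IsLowerBand N r A) {k : ℕ}
    (hrows : IdentityOnRows {i : Fin N | k - 1 + r ≤ (i : ℕ)} A)
    (M : Matrix (Fin (r + 1)) (Fin (r + 1)) ℂ) : IsLowerBand N r (A * embed N r k M) := by
  intro i j hij
  by_cases hi : k - 1 + r ≤ (i : ℕ)
  · rw [hrows.mul_apply hi, isLowerBand_embed k M i j hij]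
  · rw [(identityOnCols_embed k M).mul_apply i (by grind), hA i j hij]

theorem IsLowerBand.mul_embedLast {A : Matrix (Fin N) (Fin N) ℂ} (hA : IsLowerBand N r A)
    (M : Matrix (Fin r) (Fin r) ℂ) : IsLowerBand N r (A * embedLast N r M) := fun i j hij => by
  rw [(identityOnCols_embedLast M).mul_apply i (by grind), hA i j hij]

def embedProd (N r : ℕ) (G : ℕ → Matrix (Fin (r + 1)) (Fin (r + 1)) ℂ) (s m : ℕ) :
    Matrix (Fin N) (Fin N) ℂ :=
  ((List.range' s m).map fun k => embed N r k (G k)).prod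

variable (G : ℕ → Matrix (Fin (r + 1)) (Fin (r + 1)) ℂ)

theorem embedProd_add (s m l : ℕ) :
    embedProd N r G s (m + l) = embedProd N r G s m * embedProd N r G (s + m) l := by
  rw [embedProd, ← List.range'_append_1, List.map_append, List.prod_append]
  rfl

theorem embedProd_succ (s m : ℕ) :
    embedProd N r G s (m + 1) = embedProd N r G s m * embed N r (s + m) (G (s + m)) := by
  rw [embedProd_add]
  simp [embedProd]

theorem identityOnRows_embedProd_of_lt (s m : ℕ) :
    IdentityOnRows {i : Fin N | (i : ℕ) < s - 1} (embedProd N r G s m) := by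
  refine IdentityOnRows.list_prod (List.forall_mem_map.2 fun k hk => ?_)
  exact (identityOnRows_embed k _).mono fun i hi => by grind

theorem identityOnRows_embedProd_of_ge (s m : ℕ) :
    IdentityOnRows {i : Fin N | s - 1 + m + r ≤ (i : ℕ)} (embedProd N r G s m) := by
  refine IdentityOnRows.list_prod (List.forall_mem_map.2 fun k hk => ?_)
  exact (identityOnRows_embed k _).mono fun i hi => by grind

theorem identityOnCols_embedProd_of_ge (s m : ℕ) :
    IdentityOnCols {j : Fin N | s - 1 + m + r ≤ (j : ℕ)} (embedProd N r G s m) := by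
  refine IdentityOnCols.list_prod (List.forall_mem_map.2 fun k hk => ?_)
  exact (identityOnCols_embed k _).mono fun j hj => by grind

theorem isLowerBand_embedProd_one (m : ℕ) : IsLowerBand N r (embedProd N r G 1 m) := by
  induction m with
  | zero =>
    intro i j hij
    rw [embedProd, List.range'_zero, List.map_nil, List.prod_nil, one_apply_val, if_neg (by omega)]
  | succ m ih =>
    rw [embedProd_succ]
    exact ih.mul_embed ((identityOnRows_embedProd_of_ge G 1 m).mono fun i hi => by grind) _

theorem isUpperGreen_of_forall_exists_mul {W : Matrix (Fin N) (Fin N) ℂ}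
    (hW : ∀ k, 1 ≤ k → k ≤ N - r → ∃ P Q, W = P * Q ∧
      IdentityOnCols {j : Fin N | k - 1 + r ≤ (j : ℕ)} P ∧
      IdentityOnRows {i : Fin N | (i : ℕ) < k - 1} Q) :
    IsUpperGreen N r W := by
  intro k hk1 hk2
  obtain ⟨P, Q, rfl, hP, hQ⟩ := hW k hk1 hk2
  let window : Finset (Fin N) := Finset.Ico ⟨k - 1, by omega⟩ ⟨k - 1 + r, by omega⟩
  refine (rank_submatrix_mul_le_card P Q _ _ window fun i j t ht => ?_).trans
    (by simp [window, Fin.card_Ico])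
  simp only [window, Finset.mem_Ico, Fin.le_def, Fin.lt_def, not_and_or, not_le, not_lt] at ht
  rcases ht with ht | ht
  · rw [congrFun (hQ t ht) _, one_apply_val, if_neg (by grind), mul_zero]
  · rw [hP t ht, one_apply_val, if_neg (by grind), zero_mul]

theorem product_is_upperGreen_lowerBand_general (N r : ℕ)
    (Wk : ℕ → Matrix (Fin (r + 1)) (Fin (r + 1)) ℂ) (Wlast : Matrix (Fin r) (Fin r) ℂ)
    (W : Matrix (Fin N) (Fin N) ℂ)
    (hW : W = prodAsc N r Wk * embedLast N r Wlast) :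
    IsUpperGreen N r W ∧ IsLowerBand N r W := by
  subst hW
  have hprod : prodAsc N r Wk = embedProd N r Wk 1 (N - r) := rfl
  refine ⟨isUpperGreen_of_forall_exists_mul fun k hk1 hk2 => ?_,
    (isLowerBand_embedProd_one Wk (N - r)).mul_embedLast Wlast⟩
  refine ⟨embedProd N r Wk 1 (k - 1), embedProd N r Wk k (N - r - (k - 1)) * embedLast N r Wlast,
    ?_, ?_, ?_⟩
  · have hsplit := embedProd_add (N := N) Wk 1 (k - 1) (N - r - (k - 1))
    rw [show 1 + (k - 1) = k by omega, show k - 1 + (N - r - (k - 1)) = N - r by omega] at hsplit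
    rw [← mul_assoc, hprod, hsplit]
  · exact (identityOnCols_embedProd_of_ge Wk 1 (k - 1)).mono fun j hj => by grind
  · exact (identityOnRows_embedProd_of_lt Wk k _).mul
      ((identityOnRows_embedLast Wlast).mono fun i hi => by grind)

/-- A product `W = W̃_1·W̃_2⋯W̃_{N-r+1}` of embedded factors (increasing order of indices)
is an upper Green and lower band matrix of order `r`. -/
theorem product_is_upperGreen_lowerBand (N r : ℕ) (hr : 0 < r) (hNr : r < N)
    (Wk : ℕ → Matrix (Fin (r + 1)) (Fin (r + 1)) ℂ) (Wlast : Matrix (Fin r) (Fin r) ℂ)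
    (W : Matrix (Fin N) (Fin N) ℂ)
    (hW : W = prodAsc N r Wk * embedLast N r Wlast) :
    IsUpperGreen N r W ∧ IsLowerBand N r W :=
  product_is_upperGreen_lowerBand_general N r Wk Wlast W hW
end
end

section
/- Let S be an N×N upper triangular complex matrix and let B be an N×N matrix with lower Green generators p_B(i), q_B(j), a_B(k) (i, j, k = 1,…,N−r), p_B(N−r+1) of order r. Set s_k = S(k,k), l_k = S(k, k+1:N), and S_{N−r+1} = S(N−r+1:N, N−r+1:N). Define q_C(k) = q_B(k) and a_C(k) = a_B(k) for k = 1,…,N−r; set P^B_{N−r+1} = p_B(N−r+1) and p_C(N−r+1) = S_{N−r+1}·p_B(N−r+1); and for k = N−r,…,1 set p_C(k) = s_k·p_B(k) + l_k·P^B_{k+1}·a_B(k) and P^B_k = (p_B(k); P^B_{k+1}·a_B(k)) (the row p_B(k) stacked above the matrix P^B_{k+1}·a_B(k)). Then p_C(i), q_C(i), a_C(i) (i = 1,…,N−r), p_C(N−r+1) are lower Green generators of the product C = S·B; in particular C is a lower Green matrix of order r. -/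
open Matrix

noncomputable section

/-!
Let `W_k` be the `r × (k+r-1)` matrix `[a^>_{k,0} | a^>_{k,1} q(1) | ⋯ | a^>_{k,k-1} q(k-1)]`.
The generator identities say that row `i` of `B`, cut to its first `i+r-1` columns, is
`p(i) W_i`, and the last `r` rows are `p(N-r+1) W_{N-r+1}`. Since `W_{k+1} = a(k) W_k` on the
first `k+r-1` columns, downward induction on `k` gives `B(k:N, 1:k+r-1) = P^B_k W_k`; in particular
this block has rank at most `r`. As `S` is upper triangular,
`C(k:N, 1:k+r-1) = S(k:N, k:N) P^B_k W_k`, and the first row of `S(k:N, k:N) P^B_k` is `p_C(k)`,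
so `C` has the generators `p_C, q_B, a_B` and is again a lower Green matrix.
-/
theorem sum_fin_eq_sum_shift {M : Type*} [AddCommMonoid M] {N c n : ℕ} (h : c + n = N)
    (f : Fin N → M) (hf : ∀ m : Fin N, (m : ℕ) < c → f m = 0) :
    ∑ m, f m = ∑ t : Fin n, f ⟨c + t, by omega⟩ := by
  subst h
  rw [Fin.sum_univ_add, Finset.sum_eq_zero fun i _ => hf _ (by simp), zero_add]
  rfl

theorem aGT_succ_left (r : ℕ) (a : ℕ → Matrix (Fin r) (Fin r) ℂ) {k s : ℕ} (h : s < k) :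
    aGT r a (k + 1) s = a k * aGT r a k s := by
  unfold aGT
  rw [show k + 1 - 1 - s = k - 1 - s + 1 by omega, List.range'_concat]
  simp [show s + 1 + (k - 1 - s) = k by omega]

/-- Column `j` (0-based) of the `r × (k+r-1)` matrix
`W_k = [a^>_{k,0} | a^>_{k,1} q(1) | ⋯ | a^>_{k,k-1} q(k-1)]`. -/
def lowerGenCol (r : ℕ) (a : ℕ → Matrix (Fin r) (Fin r) ℂ) (q : ℕ → Matrix (Fin r) (Fin 1) ℂ)
    (k j : ℕ) : Fin r → ℂ :=
  if h : j < r then fun l => aGT r a k 0 l ⟨j, h⟩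
  else fun l => (aGT r a k (j - r + 1) * q (j - r + 1)) l 0

theorem lowerGenCol_succ (r : ℕ) (a : ℕ → Matrix (Fin r) (Fin r) ℂ)
    (q : ℕ → Matrix (Fin r) (Fin 1) ℂ) {k j : ℕ} (hk : 1 ≤ k) (hj : j < k + r - 1) :
    lowerGenCol r a q (k + 1) j = a k *ᵥ lowerGenCol r a q k j := by
  unfold lowerGenCol
  split_ifs with h
  · ext l
    simp [aGT_succ_left r a (show 0 < k by omega), Matrix.mul_apply, Matrix.mulVec, dotProduct]
  · ext l
    rw [aGT_succ_left r a (show j - r + 1 < k by omega), Matrix.mul_assoc]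
    simp [Matrix.mul_apply, Matrix.mulVec, dotProduct]

theorem rowGenerators_iff {N n r k : ℕ} (a : ℕ → Matrix (Fin r) (Fin r) ℂ)
    (q : ℕ → Matrix (Fin r) (Fin 1) ℂ) (hk1 : 1 ≤ k) (hkN : k + r ≤ N + 1) (hr : r < N)
    (v : Matrix (Fin n) (Fin r) ℂ) (x : Fin n) (b : Fin N → ℂ) :
    ((∀ j : Fin r, b ⟨j, by omega⟩ = (v * aGT r a k 0) x j) ∧
      (∀ (s : ℕ) (hs1 : 2 ≤ s) (hs2 : s ≤ k),
        b ⟨r + s - 2, by omega⟩ = (v * aGT r a k (s - 1) * q (s - 1)) x 0)) ↔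
      ∀ j : Fin N, (j : ℕ) < k + r - 1 → b j = v x ⬝ᵥ lowerGenCol r a q k j := by
  constructor
  · rintro ⟨hcols, hqcols⟩ j hj
    unfold lowerGenCol
    split_ifs with h
    · exact (hcols ⟨j, h⟩).trans (Matrix.mul_apply' ..)
    · have := hqcols (j - r + 2) (by omega) (by omega)
      simp only [show r + (j - r + 2) - 2 = (j : ℕ) by omega,
        show j - r + 2 - 1 = j - r + 1 by omega, Matrix.mul_assoc] at this
      exact this.trans (Matrix.mul_apply' ..)
  · intro h
    refine ⟨fun j => ?_, fun s hs1 hs2 => ?_⟩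
    · rw [h _ (by simp; omega), Matrix.mul_apply', lowerGenCol, dif_pos j.isLt]
    · rw [h _ (by simp; omega), Matrix.mul_assoc, Matrix.mul_apply', lowerGenCol,
        dif_neg (by simp; omega), show r + s - 2 - r + 1 = s - 1 by omega]

theorem isLowerGreenGenerators_iff {N r : ℕ} (hNr : r < N)
    {p : ℕ → Matrix (Fin 1) (Fin r) ℂ} {q : ℕ → Matrix (Fin r) (Fin 1) ℂ}
    {a : ℕ → Matrix (Fin r) (Fin r) ℂ} {pLast : Matrix (Fin r) (Fin r) ℂ}
    {B : Matrix (Fin N) (Fin N) ℂ} :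
    IsLowerGreenGenerators N r hNr p q a pLast B ↔
      (∀ (i : ℕ) (hi1 : 1 ≤ i) (hi2 : i ≤ N - r) (j : Fin N), (j : ℕ) < i + r - 1 →
        B ⟨i - 1, by omega⟩ j = p i 0 ⬝ᵥ lowerGenCol r a q i j) ∧
      (∀ (t : Fin r) (j : Fin N),
        B ⟨N - r + t, by omega⟩ j = pLast t ⬝ᵥ lowerGenCol r a q (N - r + 1) j) := by
  constructor
  · rintro ⟨h1, h2, h3, h4⟩
    refine ⟨fun i hi1 hi2 => (rowGenerators_iff a q (by omega) (by omega) hNr (p i) 0 _).1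
      ⟨h1 i hi1 hi2, h2 i hi1 hi2⟩, fun t j => ?_⟩
    exact (rowGenerators_iff a q (by omega) (by omega) hNr pLast t _).1 ⟨h3 t, h4 t⟩ j (by omega)
  · rintro ⟨hrows, hlast⟩
    have hi := fun i hi1 hi2 => (rowGenerators_iff a q (by omega) (by omega) hNr (p i) 0 _).2
      (hrows i hi1 hi2)
    have ht := fun t => (rowGenerators_iff a q (k := N - r + 1) (by omega) (by omega) hNr
      pLast t _).2 fun j _ => hlast t j
    exact ⟨fun i hi1 hi2 => (hi i hi1 hi2).1, fun i hi1 hi2 => (hi i hi1 hi2).2,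
      fun t => (ht t).1, fun t => (ht t).2⟩

/-- In 1-based notation, `B(k:N, 1:k+r-1) = R(k:N, :) · W_k`. -/
def LowerFactorAt {N : ℕ} (r k : ℕ) (a : ℕ → Matrix (Fin r) (Fin r) ℂ)
    (q : ℕ → Matrix (Fin r) (Fin 1) ℂ) (B : Matrix (Fin N) (Fin N) ℂ)
    (R : Matrix (Fin N) (Fin r) ℂ) : Prop :=
  ∀ m j : Fin N, k - 1 ≤ (m : ℕ) → (j : ℕ) < k + r - 1 → B m j = R m ⬝ᵥ lowerGenCol r a q k j

section LowerFactorAt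

variable {N r k : ℕ} {a : ℕ → Matrix (Fin r) (Fin r) ℂ} {q : ℕ → Matrix (Fin r) (Fin 1) ℂ}
  {B : Matrix (Fin N) (Fin N) ℂ} {R : Matrix (Fin N) (Fin r) ℂ}

theorem LowerFactorAt.of_succ {R' : Matrix (Fin N) (Fin r) ℂ} (hk : 1 ≤ k)
    (h : LowerFactorAt r (k + 1) a q B R')
    (hrow : ∀ m j : Fin N, (m : ℕ) = k - 1 → (j : ℕ) < k + r - 1 →
      B m j = R m ⬝ᵥ lowerGenCol r a q k j)
    (hR : ∀ m : Fin N, k ≤ (m : ℕ) → R m = R' m ᵥ* a k) :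
    LowerFactorAt r k a q B R := by
  intro m j hm hj
  rcases (show (m : ℕ) = k - 1 ∨ k ≤ m by omega) with hm | hm
  · exact hrow m j hm hj
  · rw [h m j (by omega) (by omega), lowerGenCol_succ r a q hk hj, hR m hm,
      Matrix.dotProduct_mulVec]

theorem LowerFactorAt.upperTriangular_mul {S : Matrix (Fin N) (Fin N) ℂ}
    (hS : ∀ i j : Fin N, (j : ℕ) < (i : ℕ) → S i j = 0) (h : LowerFactorAt r k a q B R) :
    LowerFactorAt r k a q (S * B) (S * R) := by
  intro m j hm hj
  have hrows : ∀ x : Fin N, S m x * B x j = S m x * (R x ⬝ᵥ lowerGenCol r a q k j) := by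
    intro x
    rcases lt_or_ge (x : ℕ) m with hx | hx
    · simp [hS m x hx]
    · rw [h x j (by omega) hj]
  simp only [Matrix.mul_apply, hrows, dotProduct, Finset.mul_sum, Finset.sum_mul, mul_assoc]
  exact Finset.sum_comm

theorem isLowerGreen_of_lowerFactorAt
    (h : ∀ k, 1 ≤ k → k ≤ N - r → ∃ R, LowerFactorAt r k a q B R) : IsLowerGreen N r B := by
  intro k hk1 hk2
  obtain ⟨R, hR⟩ := h k hk1 hk2
  calc _ = (R.submatrix (fun i : Fin (N - k + 1) => ⟨k - 1 + (i : ℕ), by omega⟩) id *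
        Matrix.of fun l (j : Fin (k + r - 1)) => lowerGenCol r a q k j l).rank := by
        congr 1
        ext i j
        exact hR _ _ (by simp) j.isLt
    _ ≤ r := (Matrix.rank_mul_le_left _ _).trans (Matrix.rank_le_width _)

end LowerFactorAt

/-- `P^B_k` (with rows `P k 0, P k 1, …`) placed in rows `k-1, …, N-1` (0-based). -/
def levelRows {N r : ℕ} (P : ℕ → ℕ → Fin r → ℂ) (k : ℕ) : Matrix (Fin N) (Fin r) ℂ :=
  Matrix.of fun m => P k (m - (k - 1))

theorem lowerFactorAt_levelRows {N r : ℕ} (hNr : r < N)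
    {p : ℕ → Matrix (Fin 1) (Fin r) ℂ} {q : ℕ → Matrix (Fin r) (Fin 1) ℂ}
    {a : ℕ → Matrix (Fin r) (Fin r) ℂ} {pLast : Matrix (Fin r) (Fin r) ℂ}
    {B : Matrix (Fin N) (Fin N) ℂ} (hgen : IsLowerGreenGenerators N r hNr p q a pLast B)
    {P : ℕ → ℕ → Fin r → ℂ}
    (hPtop : ∀ (t : Fin r) (j : Fin r), P (N - r + 1) (t : ℕ) j = pLast t j)
    (hPfirst : ∀ k, 1 ≤ k → k ≤ N - r → ∀ j : Fin r, P k 0 j = p k 0 j)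
    (hPrec : ∀ k, 1 ≤ k → k ≤ N - r → ∀ (t : ℕ) (j : Fin r),
      P k (t + 1) j = ∑ l : Fin r, P (k + 1) t l * a k l j)
    {k : ℕ} (hk1 : 1 ≤ k) (hk2 : k ≤ N - r + 1) :
    LowerFactorAt r k a q B (levelRows P k) := by
  obtain ⟨hrows, hlast⟩ := (isLowerGreenGenerators_iff hNr).1 hgen
  induction hk2 using Nat.decreasingInduction with
  | self =>
    intro m j hm _
    convert hlast ⟨m - (N - r), by omega⟩ j using 2
    · ext; simp only; omega
    · ext l
      simp [levelRows, ← hPtop]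
  | of_succ k hk ih =>
    refine (ih (by omega)).of_succ hk1 (fun m j hm hj => ?_) (fun m hm => ?_)
    · rw [show m = ⟨k - 1, by omega⟩ from Fin.ext hm]
      convert hrows k hk1 (by omega) j hj using 2
      ext l
      simp [levelRows, hPfirst k hk1 (by omega)]
    · ext j
      simp only [levelRows, Matrix.of_apply, show (m : ℕ) - (k - 1) = m - k + 1 by omega,
        hPrec k hk1 (by omega), show k + 1 - 1 = k by omega]
      rfl

/-- The rows of `P^B_k`: `P^B_{N-r+1} = p(N-r+1)` and `P^B_k = (p(k); P^B_{k+1} a(k))`. -/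
def lowerRows (N r : ℕ) (p : ℕ → Matrix (Fin 1) (Fin r) ℂ) (a : ℕ → Matrix (Fin r) (Fin r) ℂ)
    (pLast : Matrix (Fin r) (Fin r) ℂ) (k t : ℕ) : Fin r → ℂ :=
  if N - r < k then (if ht : t < r then pLast ⟨t, ht⟩ else 0)
  else match t with
    | 0 => p k 0
    | t + 1 => lowerRows N r p a pLast (k + 1) t ᵥ* a k
termination_by N - r + 1 - k

theorem IsLowerGreenGenerators.isLowerGreen {N r : ℕ} {hNr : r < N}
    {p : ℕ → Matrix (Fin 1) (Fin r) ℂ} {q : ℕ → Matrix (Fin r) (Fin 1) ℂ}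
    {a : ℕ → Matrix (Fin r) (Fin r) ℂ} {pLast : Matrix (Fin r) (Fin r) ℂ}
    {B : Matrix (Fin N) (Fin N) ℂ} (hgen : IsLowerGreenGenerators N r hNr p q a pLast B) :
    IsLowerGreen N r B := by
  have hPtop : ∀ t j : Fin r, lowerRows N r p a pLast (N - r + 1) t j = pLast t j := by
    intro t j
    rw [lowerRows.eq_def, if_pos (by omega), dif_pos t.isLt]
  have hPfirst : ∀ k, 1 ≤ k → k ≤ N - r → ∀ j : Fin r,
      lowerRows N r p a pLast k 0 j = p k 0 j := by
    intro k _ hk j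
    rw [lowerRows, if_neg (by omega)]
  have hPrec : ∀ k, 1 ≤ k → k ≤ N - r → ∀ (t : ℕ) (j : Fin r),
      lowerRows N r p a pLast k (t + 1) j =
        ∑ l : Fin r, lowerRows N r p a pLast (k + 1) t l * a k l j := by
    intro k _ hk t j
    rw [lowerRows, if_neg (by omega)]
    rfl
  exact isLowerGreen_of_lowerFactorAt fun k hk1 hk2 =>
    ⟨_, lowerFactorAt_levelRows hNr hgen hPtop hPfirst hPrec hk1 (by omega)⟩

section UpperTriangular

variable {N r : ℕ} {S : Matrix (Fin N) (Fin N) ℂ} {P : ℕ → ℕ → Fin r → ℂ}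

theorem upperTriangular_mul_levelRows_apply
    (hS : ∀ i j : Fin N, (j : ℕ) < (i : ℕ) → S i j = 0) {a : ℕ → Matrix (Fin r) (Fin r) ℂ}
    {k : ℕ} (hPrec : ∀ (t : ℕ) (j : Fin r), P k (t + 1) j = ∑ l : Fin r, P (k + 1) t l * a k l j)
    (hk1 : 1 ≤ k) (hk2 : k ≤ N - r) (j : Fin r) :
    (S * levelRows (N := N) P k) ⟨k - 1, by omega⟩ j =
      S ⟨k - 1, by omega⟩ ⟨k - 1, by omega⟩ * P k 0 j
        + ∑ t : Fin (N - k), ∑ l : Fin r,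
            S ⟨k - 1, by omega⟩ ⟨k + (t : ℕ), by omega⟩ * P (k + 1) (t : ℕ) l * a k l j := by
  rw [Matrix.mul_apply, sum_fin_eq_sum_shift (c := k - 1) (n := N - k + 1) (by omega) _
    fun m hm => by rw [hS _ m hm, zero_mul], Fin.sum_univ_succ]
  simp only [levelRows, Matrix.of_apply, Fin.val_zero, Fin.val_succ, add_zero,
    Nat.add_sub_cancel_left, Nat.sub_self, hPrec, Finset.mul_sum, mul_assoc]
  congr 1
  refine Finset.sum_congr rfl fun t _ => ?_
  simp only [show k - 1 + (t + 1) = k + t by omega]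

theorem upperTriangular_mul_levelRows_last_apply
    (hS : ∀ i j : Fin N, (j : ℕ) < (i : ℕ) → S i j = 0) (hNr : r < N) (t j : Fin r) :
    (S * levelRows (N := N) P (N - r + 1)) ⟨N - r + t, by omega⟩ j =
      ∑ l : Fin r, S ⟨N - r + t, by omega⟩ ⟨N - r + l, by omega⟩ * P (N - r + 1) l j := by
  rw [Matrix.mul_apply, sum_fin_eq_sum_shift (c := N - r) (n := r) (by omega) _
    fun m hm => by rw [hS _ m (by simp; omega), zero_mul]]
  simp [levelRows]

end UpperTriangular

/-- Multiplying a lower Green matrix `B` (given via lower Green generators) on the left by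
an upper triangular matrix `S` yields a lower Green matrix `C = S·B` of order `r`, whose
lower Green generators are `q_C = q_B`, `a_C = a_B`,
`p_C(N-r+1) = S(N-r+1:N, N-r+1:N)·p_B(N-r+1)` and, recursively downwards,
`p_C(k) = s_k·p_B(k) + l_k·P^B_{k+1}·a_B(k)` with
`P^B_{N-r+1} = p_B(N-r+1)`, `P^B_k = (p_B(k); P^B_{k+1}·a_B(k))`. -/
theorem upperTriangular_mul_lowerGreen (N r : ℕ) (hNr : r < N)
    (S B : Matrix (Fin N) (Fin N) ℂ)
    (hS : ∀ i j : Fin N, (j : ℕ) < (i : ℕ) → S i j = 0)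
    (pB : ℕ → Matrix (Fin 1) (Fin r) ℂ) (qB : ℕ → Matrix (Fin r) (Fin 1) ℂ)
    (aB : ℕ → Matrix (Fin r) (Fin r) ℂ) (pBlast : Matrix (Fin r) (Fin r) ℂ)
    (hgen : IsLowerGreenGenerators N r hNr pB qB aB pBlast B)
    -- the matrices `P^B_k` (of size `(N-k+1)×r`), encoded by their rows
    (P : ℕ → ℕ → Fin r → ℂ)
    (hPtop : ∀ (t : Fin r) (j : Fin r), P (N - r + 1) (t : ℕ) j = pBlast t j)
    (hPfirst : ∀ (k : ℕ) (hk1 : 1 ≤ k) (hk2 : k ≤ N - r) (j : Fin r),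
      P k 0 j = pB k 0 j)
    (hPrec : ∀ (k : ℕ) (hk1 : 1 ≤ k) (hk2 : k ≤ N - r) (t : ℕ) (j : Fin r),
      P k (t + 1) j = ∑ l : Fin r, P (k + 1) t l * aB k l j)
    -- the generators `p_C`
    (pC : ℕ → Matrix (Fin 1) (Fin r) ℂ)
    (hpC : ∀ (k : ℕ) (hk1 : 1 ≤ k) (hk2 : k ≤ N - r) (j : Fin r),
      pC k 0 j = S ⟨k - 1, by omega⟩ ⟨k - 1, by omega⟩ * pB k 0 j
        + ∑ t : Fin (N - k), ∑ l : Fin r,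
            S ⟨k - 1, by omega⟩ ⟨k + (t : ℕ), by have := t.isLt; omega⟩
              * P (k + 1) (t : ℕ) l * aB k l j)
    (pClast : Matrix (Fin r) (Fin r) ℂ)
    (hpClast : ∀ (i : Fin r) (j : Fin r),
      pClast i j = ∑ l : Fin r,
        S ⟨N - r + (i : ℕ), by have := i.isLt; omega⟩
          ⟨N - r + (l : ℕ), by have := l.isLt; omega⟩ * pBlast l j) :
    IsLowerGreenGenerators N r hNr pC qB aB pClast (S * B) ∧ IsLowerGreen N r (S * B) := by
  have hfactor := fun k (hk1 : 1 ≤ k) (hk2 : k ≤ N - r + 1) =>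
    (lowerFactorAt_levelRows hNr hgen hPtop hPfirst hPrec hk1 hk2).upperTriangular_mul hS
  have hgenC : IsLowerGreenGenerators N r hNr pC qB aB pClast (S * B) := by
    refine (isLowerGreenGenerators_iff hNr).2 ⟨fun i hi1 hi2 j hj => ?_, fun t j => ?_⟩
    · rw [hfactor i hi1 (by omega) _ j le_rfl hj]
      congr 1
      ext l
      rw [hpC i hi1 hi2 l, upperTriangular_mul_levelRows_apply hS (hPrec i hi1 hi2) hi1 hi2,
        hPfirst i hi1 hi2]
    · rw [hfactor (N - r + 1) (by omega) le_rfl _ j (by simp) (by omega)]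
      congr 1
      ext l
      simp only [hpClast, upperTriangular_mul_levelRows_last_apply hS hNr, hPtop]
  exact ⟨hgenC, hgenC.isLowerGreen⟩
end
end

section
/- Every N×N complex lower band matrix A of order r admits a factorization A = U·R, where R is an upper triangular matrix and U is a unitary matrix of the form U = Ũ_1·Ũ_2⋯Ũ_{N−r+1} (product in increasing order of indices), the embedded factors being built from unitary matrices U_k ∈ ℂ^{(r+1)×(r+1)} (k = 1,…,N−r) and a unitary matrix U_{N−r+1} ∈ ℂ^{r×r}. -/
open Matrix

noncomputable section

/-!
Sweep down the diagonal. At step `k` the subdiagonal part of column `k` lives, by the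
band structure, in rows `k, …, k + r` only; a unitary `(r+1)×(r+1)` block `W` acting on these rows
with `Wᴴ v ∈ span e₀` (from a QR factorisation of a matrix whose columns are `v`) clears it. Rows
outside the window are untouched and, in the window rows, the earlier columns are already zero, so
the band shape and the triangularity of earlier columns survive. After `N - r` steps only the
trailing `r×r` block is not triangular, and its QR factorisation supplies `U_{N-r+1}`.
-/

theorem Matrix.exists_qr {𝕜 ι : Type*} [RCLike 𝕜] [Fintype ι] [DecidableEq ι] [LinearOrder ι]
    [LocallyFiniteOrderBot ι] (A : Matrix ι ι 𝕜) :
    ∃ Q ∈ unitaryGroup ι 𝕜, ∃ R : Matrix ι ι 𝕜, R.IsUpperTriangular ∧ A = Q * R := by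
  let e := EuclideanSpace.basisFun ι 𝕜
  let f : ι → EuclideanSpace 𝕜 ι := fun j => WithLp.toLp 2 (fun i => A i j)
  let b := InnerProductSpace.gramSchmidtOrthonormalBasis (finrank_euclideanSpace (𝕜 := 𝕜)) f
  refine ⟨e.toBasis.toMatrix b, e.toMatrix_orthonormalBasis_mem_unitary b, b.toBasis.toMatrix f,
    InnerProductSpace.gramSchmidtOrthonormalBasis_inv_isUpperTriangular _ f, ?_⟩
  rw [← b.coe_toBasis, Module.Basis.toMatrix_mul_toMatrix]
  rfl

theorem Matrix.conjTranspose_mul_eq_of_eq_mul {α ι : Type*} [CommRing α] [StarRing α] [Fintype ι]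
    [DecidableEq ι] {A Q R : Matrix ι ι α} (hQ : Q ∈ unitaryGroup ι α) (hA : A = Q * R) :
    Qᴴ * A = R := by
  rw [hA, ← mul_assoc, ← star_eq_conjTranspose, Unitary.star_mul_self_of_mem hQ, one_mul]

theorem Matrix.exists_unitary_conjTranspose_mulVec_eq_zero {𝕜 : Type*} [RCLike 𝕜] {n : ℕ}
    (v : Fin (n + 1) → 𝕜) :
    ∃ W ∈ unitaryGroup (Fin (n + 1)) 𝕜, ∀ t ≠ 0, (Wᴴ *ᵥ v) t = 0 := by
  obtain ⟨W, hW, R, hR, hvR⟩ := exists_qr (of fun i (_ : Fin (n + 1)) => v i)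
  refine ⟨W, hW, fun t ht => ?_⟩
  rw [← hR (Fin.pos_iff_ne_zero.mpr ht), ← conjTranspose_mul_eq_of_eq_mul hW hvR]
  rfl

def Fin.window {N o m : ℕ} (h : o + m ≤ N) (t : Fin m) : Fin N := ⟨o + t, by omega⟩

@[simp]
theorem Fin.val_window {N o m : ℕ} (h : o + m ≤ N) (t : Fin m) : (Fin.window h t : ℕ) = o + t :=
  rfl

theorem Fin.exists_window_eq_or {N o m : ℕ} (h : o + m ≤ N) (i : Fin N) :
    (∃ t, Fin.window h t = i) ∨ ((i : ℕ) < o ∨ o + m ≤ i) := by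
  by_cases hi : o ≤ (i : ℕ) ∧ (i : ℕ) < o + m
  · exact Or.inl ⟨⟨i - o, by omega⟩, Fin.ext (by simp; omega)⟩
  · omega

namespace Matrix

variable {α : Type*} {N o m : ℕ}

/-- `I_o ⊕ M ⊕ I_{N-o-m}`. -/
def diagBlock [Zero α] [One α] (N o : ℕ) (M : Matrix (Fin m) (Fin m) α) :
    Matrix (Fin N) (Fin N) α :=
  of fun i j =>
    if h : o ≤ (i : ℕ) ∧ (i : ℕ) < o + m ∧ o ≤ (j : ℕ) ∧ (j : ℕ) < o + m then
      M ⟨i - o, by omega⟩ ⟨j - o, by omega⟩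
    else (1 : Matrix (Fin N) (Fin N) α) i j

section Semiring

variable [Semiring α]

@[simp]
theorem diagBlock_apply_window (h : o + m ≤ N) (M : Matrix (Fin m) (Fin m) α) (s t : Fin m) :
    diagBlock N o M (Fin.window h s) (Fin.window h t) = M s t := by
  simp [diagBlock]

theorem diagBlock_apply_of_left_not_mem (M : Matrix (Fin m) (Fin m) α) {i : Fin N}
    (hi : (i : ℕ) < o ∨ o + m ≤ i) (j : Fin N) :
    diagBlock N o M i j = (1 : Matrix (Fin N) (Fin N) α) i j := by
  rw [diagBlock, of_apply, dif_neg (by omega)]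

theorem diagBlock_apply_of_right_not_mem (M : Matrix (Fin m) (Fin m) α) (i : Fin N) {j : Fin N}
    (hj : (j : ℕ) < o ∨ o + m ≤ j) :
    diagBlock N o M i j = (1 : Matrix (Fin N) (Fin N) α) i j := by
  rw [diagBlock, of_apply, dif_neg (by omega)]

theorem diagBlock_apply_window_of_not_mem (h : o + m ≤ N) (M : Matrix (Fin m) (Fin m) α)
    (s : Fin m) {j : Fin N} (hj : (j : ℕ) < o ∨ o + m ≤ j) :
    diagBlock N o M (Fin.window h s) j = 0 := by
  rw [diagBlock_apply_of_right_not_mem _ _ hj, one_apply_ne (Fin.ne_of_val_ne (by simp; omega))]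

theorem diagBlock_mul_apply_window (h : o + m ≤ N) (M : Matrix (Fin m) (Fin m) α)
    (B : Matrix (Fin N) (Fin N) α) (t : Fin m) (j : Fin N) :
    (diagBlock N o M * B) (Fin.window h t) j = (M *ᵥ fun s => B (Fin.window h s) j) t := by
  rw [mul_apply, mulVec, dotProduct]
  refine (Finset.sum_of_injOn (Fin.window h) ?_ (fun s _ => Finset.mem_coe.mpr (Finset.mem_univ _))
    ?_ ?_).symm
  · exact fun s _ s' _ hss' => Fin.ext (by simpa using congrArg Fin.val hss')
  · intro l _ hl
    rcases Fin.exists_window_eq_or h l with ⟨s, rfl⟩ | hl'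
    · exact absurd ⟨s, Finset.mem_coe.mpr (Finset.mem_univ s), rfl⟩ hl
    · rw [diagBlock_apply_window_of_not_mem h _ _ hl', zero_mul]
  · intro s _
    rw [diagBlock_apply_window]

theorem diagBlock_mul_apply_of_not_mem (M : Matrix (Fin m) (Fin m) α)
    (B : Matrix (Fin N) (Fin N) α) {i : Fin N} (hi : (i : ℕ) < o ∨ o + m ≤ i) (j : Fin N) :
    (diagBlock N o M * B) i j = B i j := by
  rw [mul_apply]
  simp_rw [diagBlock_apply_of_left_not_mem M hi]
  rw [← mul_apply, one_mul]

@[simp]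
theorem diagBlock_one : diagBlock N o (1 : Matrix (Fin m) (Fin m) α) = 1 := by
  ext i j
  simp only [diagBlock, of_apply, one_apply, Fin.ext_iff]
  split_ifs <;> first | rfl | omega

theorem diagBlock_mul (h : o + m ≤ N) (M M' : Matrix (Fin m) (Fin m) α) :
    diagBlock N o M * diagBlock N o M' = diagBlock N o (M * M') := by
  ext i j
  rcases Fin.exists_window_eq_or h i with ⟨t, rfl⟩ | hi
  · rw [diagBlock_mul_apply_window]
    rcases Fin.exists_window_eq_or h j with ⟨u, rfl⟩ | hj
    · simp only [diagBlock_apply_window]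
      rfl
    · simp only [diagBlock_apply_window_of_not_mem h _ _ hj]
      exact congrFun (mulVec_zero M) t
  · rw [diagBlock_mul_apply_of_not_mem _ _ hi, diagBlock_apply_of_left_not_mem _ hi,
      diagBlock_apply_of_left_not_mem _ hi]

theorem isUpperTriangular_diagBlock_mul (h : o + m = N) {M : Matrix (Fin m) (Fin m) α}
    {B : Matrix (Fin N) (Fin N) α} (hB : ∀ i j : Fin N, j < i → (j : ℕ) < o → B i j = 0)
    (hMB : (M * B.submatrix (Fin.window h.le) (Fin.window h.le)).IsUpperTriangular) :
    (diagBlock N o M * B).IsUpperTriangular := by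
  intro i j hji
  rcases Fin.exists_window_eq_or h.le i with ⟨t, rfl⟩ | hi
  · rw [diagBlock_mul_apply_window]
    rcases Fin.exists_window_eq_or h.le j with ⟨u, rfl⟩ | hj
    · exact hMB (Fin.lt_def.mpr (by have := Fin.lt_def.mp hji; simpa using this))
    · have hjo : (j : ℕ) < o := by simp [Fin.lt_def] at hji; omega
      have hcol : (fun s => B (Fin.window h.le s) j) = 0 :=
        funext fun s => hB _ _ (Fin.lt_def.mpr (by simp; omega)) hjo
      rw [hcol, mulVec_zero, Pi.zero_apply]
  · rw [diagBlock_mul_apply_of_not_mem _ _ hi]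
    exact hB i j hji (by simp at hji; omega)

end Semiring

section Unitary

variable [CommRing α] [StarRing α]

theorem conjTranspose_diagBlock (M : Matrix (Fin m) (Fin m) α) :
    (diagBlock N o M)ᴴ = diagBlock N o Mᴴ := by
  ext i j
  simp only [diagBlock, conjTranspose_apply, of_apply, one_apply, Fin.ext_iff]
  split_ifs <;> first | omega | simp

theorem diagBlock_mem_unitaryGroup (h : o + m ≤ N) {M : Matrix (Fin m) (Fin m) α}
    (hM : M ∈ unitaryGroup (Fin m) α) : diagBlock N o M ∈ unitaryGroup (Fin N) α := by
  rw [mem_unitaryGroup_iff, star_eq_conjTranspose, conjTranspose_diagBlock, diagBlock_mul h,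
    ← star_eq_conjTranspose, mem_unitaryGroup_iff.mp hM, diagBlock_one]

theorem diagBlock_mul_diagBlock_conjTranspose_mul (h : o + m ≤ N) {M : Matrix (Fin m) (Fin m) α}
    (hM : M ∈ unitaryGroup (Fin m) α) (B : Matrix (Fin N) (Fin N) α) :
    diagBlock N o M * (diagBlock N o Mᴴ * B) = B := by
  rw [← mul_assoc, diagBlock_mul h, ← star_eq_conjTranspose, mem_unitaryGroup_iff.mp hM,
    diagBlock_one, one_mul]

end Unitary

end Matrix

theorem embed_eq_diagBlock {N r k : ℕ} (hk : 1 ≤ k) (M : Matrix (Fin (r + 1)) (Fin (r + 1)) ℂ) :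
    embed N r k M = diagBlock N (k - 1) M := by
  ext i j
  simp only [embed, diagBlock, of_apply, one_apply, Fin.ext_iff]
  split_ifs <;> first | rfl | omega

theorem embedLast_eq_diagBlock {N r : ℕ} (hr : r ≤ N) (M : Matrix (Fin r) (Fin r) ℂ) :
    embedLast N r M = diagBlock N (N - r) M := by
  ext i j
  simp only [embedLast, diagBlock, of_apply, one_apply, Fin.ext_iff]
  split_ifs <;> first | rfl | omega

theorem prodAsc_mem_unitaryGroup {N r : ℕ} {G : ℕ → Matrix (Fin (r + 1)) (Fin (r + 1)) ℂ}
    (hG : ∀ k, 1 ≤ k → k ≤ N - r → G k ∈ unitaryGroup (Fin (r + 1)) ℂ) :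
    prodAsc N r G ∈ unitaryGroup (Fin N) ℂ := by
  refine Submonoid.list_prod_mem _ fun U hU => ?_
  obtain ⟨k, hk, rfl⟩ := List.mem_map.mp hU
  rw [List.mem_range'_1] at hk
  rw [embed_eq_diagBlock hk.1]
  exact diagBlock_mem_unitaryGroup (by omega) (hG k hk.1 (by omega))

section Sweep

variable {N r : ℕ} (W : (Fin (r + 1) → ℂ) → Matrix (Fin (r + 1)) (Fin (r + 1)) ℂ)

/-- Rows `k, …, k + r` of column `k` (0-based); junk value `0` when they do not fit. -/
def colWindow (r : ℕ) (B : Matrix (Fin N) (Fin N) ℂ) (k : ℕ) : Fin (r + 1) → ℂ :=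
  if h : k + r < N then fun t => B (Fin.window (by omega : k + (r + 1) ≤ N) t) ⟨k, by omega⟩
  else 0

def sweep (A : Matrix (Fin N) (Fin N) ℂ) : ℕ → Matrix (Fin N) (Fin N) ℂ
  | 0 => A
  | k + 1 => diagBlock N k (W (colWindow r (sweep A k) k))ᴴ * sweep A k

def sweepFactor (A : Matrix (Fin N) (Fin N) ℂ) (k : ℕ) : Matrix (Fin (r + 1)) (Fin (r + 1)) ℂ :=
  W (colWindow r (sweep W A k) k)

theorem sweep_succ (A : Matrix (Fin N) (Fin N) ℂ) (k : ℕ) :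
    sweep W A (k + 1) = diagBlock N k (sweepFactor W A k)ᴴ * sweep W A k :=
  rfl

theorem sweep_apply_eq_zero (hW : ∀ v, ∀ t ≠ 0, ((W v)ᴴ *ᵥ v) t = 0)
    {A : Matrix (Fin N) (Fin N) ℂ} (hA : IsLowerBand N r A) :
    ∀ k ≤ N - r, ∀ i j : Fin N, j < i → ((j : ℕ) < k ∨ (j : ℕ) + r < i) → sweep W A k i j = 0 := by
  intro k
  induction k with
  | zero => exact fun _ i j _ hij => hA i j (by omega)
  | succ k ih =>
    intro hk i j hji hij
    have h : k + (r + 1) ≤ N := by omega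
    have hkN : k < N := by omega
    rw [sweep_succ]
    rcases Fin.exists_window_eq_or h i with ⟨t, rfl⟩ | hi
    · rw [diagBlock_mul_apply_window]
      rw [Fin.lt_def, Fin.val_window] at hji
      rw [Fin.val_window] at hij
      rcases Nat.lt_or_ge (j : ℕ) k with hjk | hjk
      · have hcol : (fun s => sweep W A k (Fin.window h s) j) = 0 :=
          funext fun s => ih (by omega) _ _ (Fin.lt_def.mpr (by simp; omega)) (.inl hjk)
        rw [hcol, mulVec_zero, Pi.zero_apply]
      · obtain rfl : j = ⟨k, hkN⟩ := Fin.ext (show (j : ℕ) = k by have := t.isLt; omega)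
        have hcol : (fun s => sweep W A k (Fin.window h s) ⟨k, hkN⟩)
            = colWindow r (sweep W A k) k := by
          rw [colWindow, dif_pos (by omega)]
        rw [hcol]
        exact hW _ t (fun ht => by simp [ht] at hji)
    · rw [diagBlock_mul_apply_of_not_mem _ _ hi]
      exact ih (by omega) i j hji (by omega)

theorem prod_embed_sweepFactor_mul_sweep (hW : ∀ v, W v ∈ unitaryGroup (Fin (r + 1)) ℂ)
    (A : Matrix (Fin N) (Fin N) ℂ) :
    ∀ m ≤ N - r,
      ((List.range' 1 m).map fun k => embed N r k (sweepFactor W A (k - 1))).prod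
        * sweep W A m = A := by
  intro m
  induction m with
  | zero => exact fun _ => one_mul A
  | succ m ih =>
    intro hm
    have hU : sweepFactor W A m ∈ unitaryGroup (Fin (r + 1)) ℂ := hW _
    rw [List.range'_concat, List.map_append, List.prod_append, List.map_singleton,
      List.prod_singleton, mul_assoc, embed_eq_diagBlock (by omega),
      show 1 + 1 * m - 1 = m by omega, sweep_succ,
      diagBlock_mul_diagBlock_conjTranspose_mul (by omega) hU]
    exact ih (by omega)

end Sweep

theorem lowerBand_qr_general (N r : ℕ) (hNr : r < N)
    (A : Matrix (Fin N) (Fin N) ℂ) (hband : IsLowerBand N r A) :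
    ∃ (Uk : ℕ → Matrix (Fin (r + 1)) (Fin (r + 1)) ℂ)
      (Ulast : Matrix (Fin r) (Fin r) ℂ) (R : Matrix (Fin N) (Fin N) ℂ),
      (∀ (k : ℕ), 1 ≤ k → k ≤ N - r → Uk k ∈ Matrix.unitaryGroup (Fin (r + 1)) ℂ) ∧
      Ulast ∈ Matrix.unitaryGroup (Fin r) ℂ ∧
      (prodAsc N r Uk * embedLast N r Ulast) ∈ Matrix.unitaryGroup (Fin N) ℂ ∧
      (∀ i j : Fin N, (j : ℕ) < (i : ℕ) → R i j = 0) ∧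
      A = (prodAsc N r Uk * embedLast N r Ulast) * R := by
  choose W hW hWv using fun v : Fin (r + 1) → ℂ => exists_unitary_conjTranspose_mulVec_eq_zero v
  set C := sweep W A (N - r)
  have hC := sweep_apply_eq_zero W hWv hband (N - r) le_rfl
  have hlast : N - r + r = N := by omega
  obtain ⟨Q, hQ, R, hR, hQR⟩ := exists_qr (C.submatrix (Fin.window hlast.le) (Fin.window hlast.le))
  refine ⟨fun k => sweepFactor W A (k - 1), Q, diagBlock N (N - r) Qᴴ * C,
    fun k _ _ => hW _, hQ, ?_, ?_, ?_⟩
  · rw [embedLast_eq_diagBlock hNr.le]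
    exact mul_mem (prodAsc_mem_unitaryGroup fun k _ _ => hW _)
      (diagBlock_mem_unitaryGroup hlast.le hQ)
  · have hCQ := conjTranspose_mul_eq_of_eq_mul hQ hQR
    exact fun i j hji => isUpperTriangular_diagBlock_mul hlast
      (fun i j hji hj => hC i j hji (.inl hj)) (hCQ ▸ hR) hji
  · rw [embedLast_eq_diagBlock hNr.le, mul_assoc,
      diagBlock_mul_diagBlock_conjTranspose_mul hlast.le hQ]
    exact (prod_embed_sweepFactor_mul_sweep W hW A (N - r) le_rfl).symm

/-- Every lower band matrix `A` of order `r` admits a factorization `A = U·R` with `R`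
upper triangular and `U` unitary of the form `U = Ũ_1·Ũ_2⋯Ũ_{N-r+1}`, the embedded factors
being built from unitary `(r+1)×(r+1)` matrices `U_k` and a unitary `r×r` matrix `U_{N-r+1}`. -/
theorem lowerBand_qr (N r : ℕ) (hr : 0 < r) (hNr : r < N)
    (A : Matrix (Fin N) (Fin N) ℂ) (hband : IsLowerBand N r A) :
    ∃ (Uk : ℕ → Matrix (Fin (r + 1)) (Fin (r + 1)) ℂ)
      (Ulast : Matrix (Fin r) (Fin r) ℂ) (R : Matrix (Fin N) (Fin N) ℂ),
      (∀ (k : ℕ), 1 ≤ k → k ≤ N - r → Uk k ∈ Matrix.unitaryGroup (Fin (r + 1)) ℂ) ∧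
      Ulast ∈ Matrix.unitaryGroup (Fin r) ℂ ∧
      (prodAsc N r Uk * embedLast N r Ulast) ∈ Matrix.unitaryGroup (Fin N) ℂ ∧
      (∀ i j : Fin N, (j : ℕ) < (i : ℕ) → R i j = 0) ∧
      A = (prodAsc N r Uk * embedLast N r Ulast) * R :=
  lowerBand_qr_general N r hNr A hband
end
end
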